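/- arXiv:2209.14103 — 3 statements merged into one kernel-verified Lean document; each statement's English description precedes it below -/
import Mathlib

section
/- Fix δ ∈ ℝ. Let 0<β<mn, δ̃ ∈ ℝ, let p⃗ be a vector of exponents, and let v⃗=(v_1,…,v_m) be weights, each positive and finite almost everywhere, such that the pair (w, v⃗) with w = ∏_{i=1}^m v_i satisfies the H_m(p⃗,β,δ̃) condition with finite nonzero left-hand side for every ball (for some fixed splitting β = Σ β_i with 0<β_i<n). Then δ̃ = β − n/p. -/
open MeasureTheory Metric Set
open scoped ENNReal NNReal BigOperators
open scoped Classical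

noncomputable section

/-- Euclidean space `ℝⁿ`. -/
abbrev Rn (n : ℕ) : Type := EuclideanSpace ℝ (Fin n)

/-- The `q`-"norm" of a nonnegative function with respect to the measure `μ`,
for `q ∈ [1,∞]`; `q = ∞` gives the essential supremum. -/
noncomputable def LpNormE {α : Type*} [MeasurableSpace α] (μ : Measure α)
    (g : α → ℝ≥0∞) (q : ℝ≥0∞) : ℝ≥0∞ :=
  if q = ∞ then essSup g μ else (∫⁻ x, g x ^ q.toReal ∂μ) ^ (1 / q.toReal)

/-- Conjugate exponent in `[1,∞]`. -/
noncomputable def conjE (q : ℝ≥0∞) : ℝ≥0∞ :=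
  if q = 1 then ∞ else if q = ∞ then 1 else ENNReal.ofReal (q.toReal / (q.toReal - 1))

/-- Real-valued conjugate exponent of `q ∈ (1,∞]`. -/
noncomputable def conjR (q : ℝ≥0∞) : ℝ :=
  if q = ∞ then 1 else q.toReal / (q.toReal - 1)

/-- A weight: measurable, a.e. positive and finite, and locally integrable. -/
def IsWeight (n : ℕ) (u : Rn n → ℝ≥0∞) : Prop :=
  Measurable u ∧ (∀ᵐ x ∂(volume : Measure (Rn n)), 0 < u x ∧ u x < ∞) ∧
    ∀ (c : Rn n) (R : ℝ), 0 < R → ∫⁻ x in ball c R, u x < ∞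

/-- The `i`-th factor in the `H_m(p,β,δ̃)` condition over the ball `B(c,R)`
(`δ` is the fixed ambient parameter, `β i` the splitting of `β`). For `p i = 1`
the conjugate exponent is `∞` and the factor is an essential supremum. -/
noncomputable def HmFactor (n m : ℕ) (δ : ℝ) (β : Fin m → ℝ) (p : Fin m → ℝ≥0∞)
    (v : Fin m → Rn n → ℝ≥0∞) (c : Rn n) (R : ℝ) (i : Fin m) : ℝ≥0∞ :=
  LpNormE volume
    (fun y => (v i y)⁻¹ *
      (volume (ball c R) ^ (n : ℝ)⁻¹ + edist c y) ^ (-((n : ℝ) - β i + δ / (m : ℝ))))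
    (conjE (p i))

/-- The left-hand side of the `H_m(p,β,δ̃)` condition over the ball `B(c,R)`. -/
noncomputable def HmLHS (n m : ℕ) (δ δt : ℝ) (β : Fin m → ℝ) (p : Fin m → ℝ≥0∞)
    (w : Rn n → ℝ≥0∞) (v : Fin m → Rn n → ℝ≥0∞) (c : Rn n) (R : ℝ) : ℝ≥0∞ :=
  essSup w (volume.restrict (ball c R)) / volume (ball c R) ^ ((δt - δ) / (n : ℝ)) *
    ∏ i, HmFactor n m δ β p v c R i

/-- The class `H_m(p,β,δ̃)`, with fixed ambient parameter `δ` and splitting `β i`. -/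
def MemHm (n m : ℕ) (δ δt : ℝ) (β : Fin m → ℝ) (p : Fin m → ℝ≥0∞)
    (w : Rn n → ℝ≥0∞) (v : Fin m → Rn n → ℝ≥0∞) : Prop :=
  ∃ C : ℝ≥0∞, C ≠ ∞ ∧ ∀ (c : Rn n) (R : ℝ), 0 < R → HmLHS n m δ δt β p w v c R ≤ C

/-- The reverse Hölder class `RH_s`. -/
def MemRH (n : ℕ) (s : ℝ) (u : Rn n → ℝ≥0∞) : Prop :=
  ∃ C : ℝ≥0∞, C ≠ ∞ ∧ ∀ (c : Rn n) (R : ℝ), 0 < R →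
    ((volume (ball c R))⁻¹ * ∫⁻ x in ball c R, u x ^ s) ^ s⁻¹ ≤
      C * ((volume (ball c R))⁻¹ * ∫⁻ x in ball c R, u x)

/-- The reverse Hölder class `RH_∞`. -/
def MemRHinf (n : ℕ) (u : Rn n → ℝ≥0∞) : Prop :=
  ∃ C : ℝ≥0∞, C ≠ ∞ ∧ ∀ (c : Rn n) (R : ℝ), 0 < R →
    essSup u (volume.restrict (ball c R)) ≤
      C * ((volume (ball c R))⁻¹ * ∫⁻ x in ball c R, u x)

/-- The Muckenhoupt class `A_1`. -/
def MemA1 (n : ℕ) (u : Rn n → ℝ≥0∞) : Prop :=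
  ∃ C : ℝ≥0∞, C ≠ ∞ ∧ ∀ (c : Rn n) (R : ℝ), 0 < R →
    (volume (ball c R))⁻¹ * ∫⁻ x in ball c R, u x ≤
      C * essInf u (volume.restrict (ball c R))

/-- A doubling function: the integral over `2B` is controlled by the one over `B`. -/
def Doubling (n : ℕ) (u : Rn n → ℝ≥0∞) : Prop :=
  ∃ C : ℝ≥0∞, C ≠ ∞ ∧ ∀ (c : Rn n) (R : ℝ), 0 < R →
    ∫⁻ x in ball c (2 * R), u x ≤ C * ∫⁻ x in ball c R, u x

/-- The `i`-th factor in the global condition over the ball `B(c,R)`. -/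
noncomputable def GlobalFactor (n m : ℕ) (δ : ℝ) (β : Fin m → ℝ) (p : Fin m → ℝ≥0∞)
    (v : Fin m → Rn n → ℝ≥0∞) (c : Rn n) (R : ℝ) (i : Fin m) : ℝ≥0∞ :=
  LpNormE (volume.restrict (ball c R)ᶜ)
    (fun y => (v i y)⁻¹ * edist c y ^ (-((n : ℝ) - β i + δ / (m : ℝ)))) (conjE (p i))

/-- The global condition associated with the class `H_m(p,β,δ̃)`. -/
def GlobalCond (n m : ℕ) (δ δt : ℝ) (β : Fin m → ℝ) (p : Fin m → ℝ≥0∞)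
    (w : Rn n → ℝ≥0∞) (v : Fin m → Rn n → ℝ≥0∞) : Prop :=
  ∃ C : ℝ≥0∞, C ≠ ∞ ∧ ∀ (c : Rn n) (R : ℝ), 0 < R →
    essSup w (volume.restrict (ball c R)) / volume (ball c R) ^ ((δt - δ) / (n : ℝ)) *
      ∏ i, GlobalFactor n m δ β p v c R i ≤ C

/-- The local condition associated with the class `H_m(p,β,δ̃)`; here `β` is the
total (scalar) parameter. -/
def LocalCond (n m : ℕ) (δt β : ℝ) (p : Fin m → ℝ≥0∞)
    (w : Rn n → ℝ≥0∞) (v : Fin m → Rn n → ℝ≥0∞) : Prop :=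
  ∃ C : ℝ≥0∞, C ≠ ∞ ∧ ∀ (c : Rn n) (R : ℝ), 0 < R →
    essSup w (volume.restrict (ball c R)) /
        volume (ball c R) ^ (δt / (n : ℝ) + (∑ i, (p i)⁻¹).toReal - β / (n : ℝ)) *
      ∏ i, (if p i = 1 then essSup (fun x => (v i x)⁻¹) (volume.restrict (ball c R))
        else ((volume (ball c R))⁻¹ * ∫⁻ x in ball c R, (v i x)⁻¹ ^ conjR (p i)) ^
          (conjR (p i))⁻¹) ≤ C

/-- The multilinear class `A_{p⃗,∞}`. -/
def MemApInf (n m : ℕ) (p : Fin m → ℝ≥0∞) (v : Fin m → Rn n → ℝ≥0∞) : Prop :=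
  ∃ C : ℝ≥0∞, C ≠ ∞ ∧ ∀ (c : Rn n) (R : ℝ), 0 < R →
    essSup (fun x => ∏ i, v i x) (volume.restrict (ball c R)) *
      ∏ i, (if p i = 1 then essSup (fun x => (v i x)⁻¹) (volume.restrict (ball c R))
        else ((volume (ball c R))⁻¹ * ∫⁻ x in ball c R, (v i x)⁻¹ ^ conjR (p i)) ^
          (conjR (p i))⁻¹) ≤ C

/-- The multilinear class `A_{p⃗,q}` for `0 < q < ∞`. -/
def MemApq (n m : ℕ) (p : Fin m → ℝ≥0∞) (q : ℝ) (w : Fin m → Rn n → ℝ≥0∞) : Prop :=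
  ∃ C : ℝ≥0∞, C ≠ ∞ ∧ ∀ (c : Rn n) (R : ℝ), 0 < R →
    ((volume (ball c R))⁻¹ * ∫⁻ x in ball c R, ∏ i, w i x ^ q) ^ (1 / q) *
      ∏ i, (if p i = 1 then essSup (fun x => (w i x)⁻¹) (volume.restrict (ball c R))
        else ((volume (ball c R))⁻¹ * ∫⁻ x in ball c R, (w i x)⁻¹ ^ conjR (p i)) ^
          (conjR (p i))⁻¹) ≤ C

/-- The multilinear Muckenhoupt class `A_{r⃗}`. -/
def MemAvec (n m : ℕ) (r : Fin m → ℝ≥0∞) (u : Fin m → Rn n → ℝ≥0∞) : Prop :=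
  ∃ C : ℝ≥0∞, C ≠ ∞ ∧ ∀ (c : Rn n) (R : ℝ), 0 < R →
    ((volume (ball c R))⁻¹ *
        ∫⁻ x in ball c R, ∏ i, u i x ^ ((∑ j, (r j)⁻¹).toReal⁻¹ * ((r i)⁻¹).toReal)) ^
        (∑ j, (r j)⁻¹).toReal *
      ∏ i, (if r i = 1 then essSup (fun x => (u i x)⁻¹) (volume.restrict (ball c R))
        else ((volume (ball c R))⁻¹ * ∫⁻ x in ball c R, u i x ^ (1 - conjR (r i))) ^
          (conjR (r i))⁻¹) ≤ C

/-- Product Lebesgue measure on `(ℝⁿ)^m`. -/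
noncomputable def pim (n m : ℕ) : Measure (Fin m → Rn n) :=
  Measure.pi fun _ => (volume : Measure (Rn n))

/-- Size condition for a multilinear fractional kernel of order `α`. -/
def SizeCond (n m : ℕ) (α : ℝ) (K : Rn n → (Fin m → Rn n) → ℝ) : Prop :=
  ∃ C : ℝ, 0 < C ∧ ∀ (x : Rn n) (y : Fin m → Rn n), (∑ i, dist x (y i)) ≠ 0 →
    |K x y| ≤ C * (∑ i, dist x (y i)) ^ (α - (m : ℝ) * (n : ℝ))

/-- Smoothness condition with exponent `γ` for a multilinear fractional kernel. -/
def SmoothCond (n m : ℕ) (α γ : ℝ) (K : Rn n → (Fin m → Rn n) → ℝ) : Prop :=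
  ∃ C : ℝ, 0 < C ∧ ∀ (x x' : Rn n) (y : Fin m → Rn n),
    2 * dist x x' < ∑ i, dist x (y i) →
    |K x y - K x' y| ≤ C * dist x x' ^ γ * (∑ i, dist x (y i)) ^ (α - (m : ℝ) * (n : ℝ) - γ)

/-- The Lipschitz space `Λ(δ)`. -/
def MemLip (n : ℕ) (δ : ℝ) (b : Rn n → ℝ) : Prop :=
  ∃ C : ℝ, 0 ≤ C ∧ ∀ x y : Rn n, |b x - b y| ≤ C * dist x y ^ δ

/-- The multilinear integral operator with kernel `K`. -/
noncomputable def TOp (n m : ℕ) (K : Rn n → (Fin m → Rn n) → ℝ)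
    (f : Fin m → Rn n → ℝ) (x : Rn n) : ℝ :=
  ∫ y, K x y * ∏ i, f i (y i) ∂pim n m

/-- The sum-type multilinear commutator `T_{α,b}`. -/
noncomputable def TSumComm (n m : ℕ) (K : Rn n → (Fin m → Rn n) → ℝ)
    (b : Fin m → Rn n → ℝ) (f : Fin m → Rn n → ℝ) (x : Rn n) : ℝ :=
  ∑ j, ∫ y, (b j x - b j (y j)) * K x y * ∏ i, f i (y i) ∂pim n m

/-- The product-type multilinear commutator `𝒯_{α,b}` (integral representation). -/
noncomputable def TProdComm (n m : ℕ) (K : Rn n → (Fin m → Rn n) → ℝ)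
    (b : Fin m → Rn n → ℝ) (f : Fin m → Rn n → ℝ) (x : Rn n) : ℝ :=
  ∫ y, K x y * ∏ i, (b i x - b i (y i)) * f i (y i) ∂pim n m

/-- `‖f · v‖_q` for a real function `f` and a weight `v`. -/
noncomputable def wLpNorm (n : ℕ) (f : Rn n → ℝ) (v : Rn n → ℝ≥0∞) (q : ℝ≥0∞) : ℝ≥0∞ :=
  LpNormE volume (fun x => ENNReal.ofReal |f x| * v x) q

/-- The (nonnegative) multilinear fractional integral `I_{a,m}`. -/
noncomputable def IfracE (n m : ℕ) (a : ℝ) (g : Fin m → Rn n → ℝ≥0∞) (x : Rn n) : ℝ≥0∞ :=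
  ∫⁻ y, (∑ i, edist x (y i)) ^ (a - (m : ℝ) * (n : ℝ)) * ∏ i, g i (y i) ∂pim n m

/-- Commuting with `b` in the `j`-th entry. -/
noncomputable def commAt (n m : ℕ) (T : (Fin m → Rn n → ℝ) → Rn n → ℝ)
    (g : Rn n → ℝ) (j : Fin m) (f : Fin m → Rn n → ℝ) (x : Rn n) : ℝ :=
  g x * T f x - T (Function.update f j fun z => g z * f j z) x

/-- The iterated commutator `[b_k, … [b_2, [b_1, T]_1]_2 … ]_k`. -/
noncomputable def iterComm (n m : ℕ) (T : (Fin m → Rn n → ℝ) → Rn n → ℝ)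
    (b : Fin m → Rn n → ℝ) : ℕ → (Fin m → Rn n → ℝ) → Rn n → ℝ
  | 0 => T
  | k + 1 => fun f x =>
      if h : k < m then commAt n m (iterComm n m T b k) (b ⟨k, h⟩) ⟨k, h⟩ f x
      else iterComm n m T b k f x

end
section AuxForcesDelta

open Filter MeasureTheory Metric Set
open scoped ENNReal NNReal

namespace ForcesDelta

lemma conjE_one_le {q : ℝ≥0∞} (h1 : 1 ≤ q) : 1 ≤ conjE q := by
  rcases eq_or_ne q 1 with h | h
  · simp [conjE, h]
  rcases eq_or_ne q ∞ with h' | h'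
  · simp [conjE, h, h']
  · have hq1 : 1 < q := lt_of_le_of_ne h1 (Ne.symm h)
    have ht1 : 1 < q.toReal := by
      have := (ENNReal.toReal_lt_toReal (by simp) h').mpr hq1
      simpa using this
    have : (1:ℝ) ≤ q.toReal / (q.toReal - 1) := by
      rw [le_div_iff₀ (by linarith)]; linarith
    simp only [conjE, if_neg h, if_neg h']
    calc (1:ℝ≥0∞) = ENNReal.ofReal 1 := by simp
    _ ≤ ENNReal.ofReal (q.toReal / (q.toReal - 1)) := ENNReal.ofReal_le_ofReal this

lemma conj_facts {q : ℝ≥0∞} (h1 : 1 ≤ q) (hne : q ≠ 1) :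
    conjE q ≠ ∞ ∧ 0 < 1 - (q⁻¹).toReal ∧ (conjE q).toReal = (1 - (q⁻¹).toReal)⁻¹ := by
  rcases eq_or_ne q ∞ with h | h
  · subst h
    simp [conjE]
  · have hq1 : 1 < q := lt_of_le_of_ne h1 (Ne.symm hne)
    have ht1 : 1 < q.toReal := by
      have := (ENNReal.toReal_lt_toReal (by simp) h).mpr hq1
      simpa using this
    have hinv : (q⁻¹).toReal = (q.toReal)⁻¹ := by simp [ENNReal.toReal_inv]
    have hσ : 1 - (q⁻¹).toReal = (q.toReal - 1)/q.toReal := by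
      rw [hinv]; field_simp
    have hc : conjE q = ENNReal.ofReal (q.toReal / (q.toReal - 1)) := by
      simp [conjE, hne, h]
    refine ⟨by rw [hc]; exact ENNReal.ofReal_ne_top, by rw [hσ]; exact div_pos (by linarith) (by linarith), ?_⟩
    rw [hc, ENNReal.toReal_ofReal (by apply div_nonneg <;> linarith), hσ]
    rw [inv_div]

lemma sigma_nonneg {q : ℝ≥0∞} (h1 : 1 ≤ q) : 0 ≤ 1 - (q⁻¹).toReal := by
  have h : q⁻¹ ≤ 1 := ENNReal.inv_le_one.mpr h1
  have := ENNReal.toReal_mono (by simp) h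
  simpa using this

lemma sigma_eq_zero {q : ℝ≥0∞} (h1 : 1 ≤ q) (h : 1 - (q⁻¹).toReal = 0) : q = 1 := by
  have h' : (q⁻¹).toReal = 1 := by linarith
  have := (ENNReal.toReal_eq_one_iff _).mp h'
  rwa [ENNReal.inv_eq_one] at this

lemma prod_inv' {ι : Type*} (a : ι → ℝ≥0∞) (s : Finset ι) :
    (∀ i ∈ s, a i ≠ 0 ∧ a i ≠ ∞) → (∏ i ∈ s, a i)⁻¹ = ∏ i ∈ s, (a i)⁻¹ := by
  classical
  induction s using Finset.induction_on with
  | empty => simp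
  | insert _ _ hi ih =>
    rename_i j s'
    intro h
    rw [Finset.prod_insert hi, Finset.prod_insert hi,
      ENNReal.mul_inv (Or.inl (h j (Finset.mem_insert_self _ _)).1)
        (Or.inl (h j (Finset.mem_insert_self _ _)).2),
      ih (fun i his => h i (Finset.mem_insert_of_mem his))]

lemma kernel_lb {A B x t : ℝ} (hA : 0 < A) (hAx : A ≤ x) (hxB : x ≤ B) :
    min (A ^ t) (B ^ t) ≤ x ^ t := by
  rcases le_or_gt 0 t with ht | ht
  · exact le_trans (min_le_left _ _) (Real.rpow_le_rpow hA.le hAx ht)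
  · exact le_trans (min_le_right _ _) (Real.rpow_le_rpow_of_nonpos (hA.trans_le hAx) hxB ht.le)

lemma exponent_eq_zero {c e : ℝ} (hc : 0 < c) {C : ℝ≥0∞} (hC : C ≠ ∞)
    (h : ∀ R : ℝ, 0 < R → ENNReal.ofReal (c * R ^ e) ≤ C) : e = 0 := by
  by_contra he
  set R := ((C.toReal + 1) / c) ^ e⁻¹ with hR
  have hCt : (0:ℝ) ≤ C.toReal := ENNReal.toReal_nonneg
  have hq : 0 < (C.toReal + 1) / c := by positivity
  have hRpos : 0 < R := Real.rpow_pos_of_pos hq _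
  have hRe : R ^ e = (C.toReal + 1) / c := by
    rw [hR, ← Real.rpow_mul hq.le, inv_mul_cancel₀ he, Real.rpow_one]
  have h2 := h R hRpos
  rw [hRe, mul_comm, div_mul_cancel₀ _ hc.ne'] at h2
  have h3 := ENNReal.toReal_mono hC h2
  rw [ENNReal.toReal_ofReal (by positivity)] at h3
  linarith

lemma factor_lb {α : Type*} [MeasurableSpace α] (μ : Measure α) {B : Set α}
    (hB : MeasurableSet B) (u K : α → ℝ≥0∞) {q : ℝ≥0∞} (hq : 1 ≤ q) {b : ℝ≥0∞} (hb : b ≠ ∞)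
    (hK : ∀ x ∈ B, b ≤ K x) :
    b * LpNormE (μ.restrict B) u q ≤ LpNormE μ (fun x => u x * K x) q := by
  rcases eq_or_ne q ∞ with h | h
  · subst h
    simp only [LpNormE, if_pos, if_true, eq_self_iff_true]
    rw [← ENNReal.essSup_const_mul]
    refine le_trans (essSup_mono_ae ?_)
      (essSup_mono_measure (Measure.absolutelyContinuous_of_le Measure.restrict_le_self))
    filter_upwards [ae_restrict_mem hB] with x hx
    rw [mul_comm]
    exact mul_le_mul_right (hK x hx) _
  · have hq0 : q ≠ 0 := (lt_of_lt_of_le zero_lt_one hq).ne'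
    have hq0' : 0 < q.toReal := ENNReal.toReal_pos hq0 h
    simp only [LpNormE, if_neg h]
    have hbt : b ^ q.toReal ≠ ∞ := ENNReal.rpow_ne_top_of_nonneg hq0'.le hb
    have h1 : b = (b ^ q.toReal) ^ (1/q.toReal) := by
      rw [← ENNReal.rpow_mul, mul_one_div, div_self hq0'.ne', ENNReal.rpow_one]
    rw [h1, ← ENNReal.mul_rpow_of_nonneg _ _ (by positivity)]
    apply ENNReal.rpow_le_rpow _ (by positivity)
    rw [← lintegral_const_mul' _ _ hbt]
    refine le_trans (lintegral_mono_ae ?_) (lintegral_mono' Measure.restrict_le_self le_rfl)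
    filter_upwards [ae_restrict_mem hB] with x hx
    rw [← ENNReal.mul_rpow_of_nonneg _ _ hq0'.le]
    refine ENNReal.rpow_le_rpow ?_ hq0'.le
    rw [mul_comm]
    exact mul_le_mul_right (hK x hx) _

end ForcesDelta
end AuxForcesDelta

section HolderForcesDelta

open Filter MeasureTheory Metric Set
open scoped ENNReal NNReal

namespace ForcesDelta

lemma holder_core {α : Type*} [MeasurableSpace α] (μ : Measure α) (hμ : μ Set.univ ≠ 0)
    {m : ℕ} (p : Fin m → ℝ≥0∞) (hp : ∀ i, 1 ≤ p i)
    (v : Fin m → α → ℝ≥0∞) (hvm : ∀ i, Measurable (v i))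
    (hae : ∀ᵐ x ∂μ, ∀ i, 0 < v i x ∧ v i x < ∞)
    (hE0 : essSup (fun x => ∏ i, v i x) μ ≠ 0)
    (hEt : essSup (fun x => ∏ i, v i x) μ ≠ ∞) :
    μ Set.univ ^ (∑ i, (1 - ((p i)⁻¹).toReal)) ≤
      essSup (fun x => ∏ i, v i x) μ * ∏ i, LpNormE μ (fun y => (v i y)⁻¹) (conjE (p i)) := by
  classical
  set E := essSup (fun x => ∏ i, v i x) μ with hE
  set s : Fin m → ℝ := fun i => 1 - ((p i)⁻¹).toReal with hs
  set S : ℝ := ∑ i, s i with hS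
  set N : Fin m → ℝ≥0∞ := fun i => LpNormE μ (fun y => (v i y)⁻¹) (conjE (p i)) with hN
  set M : Fin m → ℝ≥0∞ := fun i => essSup (fun y => (v i y)⁻¹) μ with hM
  have hs0 : ∀ i, 0 ≤ s i := fun i => sigma_nonneg (hp i)
  have hS0 : 0 ≤ S := Finset.sum_nonneg fun i _ => hs0 i
  have hN1 : ∀ i, p i = 1 → N i = M i := by
    intro i h
    simp [hN, hM, LpNormE, conjE, h]
  -- pointwise a.e. preliminaries
  have hwE : ∀ᵐ x ∂μ, (fun x => ∏ i, v i x) x ≤ E := ENNReal.ae_le_essSup _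
  have hvM : ∀ᵐ x ∂μ, ∀ i, (v i x)⁻¹ ≤ M i :=
    ae_all_iff.mpr fun i => ENNReal.ae_le_essSup _
  rcases eq_or_lt_of_le hS0 with hSz | hSpos
  · -- all p i = 1
    have hp1 : ∀ i, p i = 1 := by
      intro i
      refine sigma_eq_zero (hp i) ?_
      have := (Finset.sum_eq_zero_iff_of_nonneg (fun i _ => hs0 i)).mp hSz.symm
      exact this i (Finset.mem_univ i)
    have hNM : ∀ i, N i = M i := fun i => hN1 i (hp1 i)
    rw [← hSz, ENNReal.rpow_zero]
    have hne : (ae μ).NeBot := ae_neBot.mpr ((Measure.measure_univ_ne_zero).mp hμ)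
    obtain ⟨x, hx1, hx2, hx3⟩ := (hae.and (hwE.and hvM)).exists
    have hw0 : (∏ i, v i x) ≠ 0 := by
      rw [← pos_iff_ne_zero, CanonicallyOrderedAdd.prod_pos]
      exact fun i _ => (hx1 i).1
    have hwt : (∏ i, v i x) ≠ ∞ := (ENNReal.prod_lt_top fun i _ => (hx1 i).2).ne
    calc (1:ℝ≥0∞) = (∏ i, v i x) * (∏ i, v i x)⁻¹ := (ENNReal.mul_inv_cancel hw0 hwt).symm
    _ = (∏ i, v i x) * ∏ i, (v i x)⁻¹ := by
        rw [prod_inv' _ _ fun i _ => ⟨(hx1 i).1.ne', (hx1 i).2.ne⟩]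
    _ ≤ E * ∏ i, N i := by
        refine mul_le_mul' hx2 (Finset.prod_le_prod' fun i _ => ?_)
        rw [hNM i]; exact hx3 i
  · -- S > 0
    set T : Finset (Fin m) := Finset.univ.filter (fun i => p i ≠ 1) with hT
    have hsT : ∀ i ∈ T, 0 < s i := by
      intro i hi
      rw [hT, Finset.mem_filter] at hi
      exact (conj_facts (hp i) hi.2).2.1
    have hsnotT : ∀ i ∈ (Finset.univ : Finset (Fin m)), i ∉ T → s i = 0 := by
      intro i _ hi
      rw [hT, Finset.mem_filter] at hi
      push_neg at hi
      have := hi (Finset.mem_univ i)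
      rw [hs]
      simp [this]
    have hST : ∑ i ∈ T, s i = S := by
      rw [hS, hT]
      refine Finset.sum_filter_of_ne fun i _ hne h1 => hne ?_
      rw [hs]; simp [h1]
    have hNT : ∀ i ∈ T, N i = (∫⁻ x, (v i x)⁻¹ ^ (s i)⁻¹ ∂μ) ^ (s i) := by
      intro i hi
      rw [hT, Finset.mem_filter] at hi
      obtain ⟨hc1, hc2, hc3⟩ := conj_facts (hp i) hi.2
      have hc3' : (conjE (p i)).toReal = (s i)⁻¹ := hc3
      rw [hN]
      simp only [LpNormE, if_neg hc1, hc3', one_div, inv_inv]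
    -- pointwise a.e. bound
    have hpt : ∀ᵐ x ∂μ, E⁻¹ ^ S⁻¹ ≤
        (∏ i ∈ Finset.univ.filter (fun i => p i = 1), M i ^ S⁻¹) *
          ∏ i ∈ T, ((v i x)⁻¹ ^ (s i)⁻¹) ^ (s i / S) := by
      filter_upwards [hae, hwE, hvM] with x h1 h2 h3
      have step1 : E⁻¹ ≤ ∏ i, (v i x)⁻¹ := by
        rw [← prod_inv' _ _ fun i _ => ⟨(h1 i).1.ne', (h1 i).2.ne⟩]
        exact ENNReal.inv_le_inv.mpr h2
      have step2 : E⁻¹ ^ S⁻¹ ≤ ∏ i, ((v i x)⁻¹) ^ S⁻¹ := by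
        rw [ENNReal.prod_rpow_of_nonneg (by positivity : (0:ℝ) ≤ S⁻¹)]
        exact ENNReal.rpow_le_rpow step1 (by positivity)
      refine step2.trans ?_
      rw [← Finset.prod_filter_mul_prod_filter_not Finset.univ (fun i => p i = 1)]
      have hTT : Finset.univ.filter (fun i => ¬ p i = 1) = T := rfl
      rw [hTT]
      refine mul_le_mul' (Finset.prod_le_prod' fun i _ => ?_) (le_of_eq ?_)
      · exact ENNReal.rpow_le_rpow (h3 i) (by positivity)
      · refine Finset.prod_congr rfl fun i hi => ?_
        rw [← ENNReal.rpow_mul]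
        congr 1
        rw [div_eq_mul_inv, ← mul_assoc, inv_mul_cancel₀ (hsT i hi).ne', one_mul]
    -- integrate
    have hconst : ∫⁻ _x, E⁻¹ ^ S⁻¹ ∂μ = E⁻¹ ^ S⁻¹ * μ Set.univ := lintegral_const _
    have hmeasT : Measurable fun x => ∏ i ∈ T, ((v i x)⁻¹ ^ (s i)⁻¹) ^ (s i / S) := by
      apply Finset.measurable_prod
      intro i _
      exact ((hvm i).inv.pow_const _).pow_const _
    have hint : E⁻¹ ^ S⁻¹ * μ Set.univ ≤
        (∏ i ∈ Finset.univ.filter (fun i => p i = 1), M i ^ S⁻¹) *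
          ∏ i ∈ T, (∫⁻ x, (v i x)⁻¹ ^ (s i)⁻¹ ∂μ) ^ (s i / S) := by
      rw [← hconst]
      refine le_trans (lintegral_mono_ae hpt) ?_
      rw [lintegral_const_mul'' _ hmeasT.aemeasurable]
      refine mul_le_mul_right ?_ _
      refine ENNReal.lintegral_prod_norm_pow_le _ (fun i _ => ((hvm i).inv.pow_const _).aemeasurable) ?_ ?_
      · rw [← Finset.sum_div, hST, div_self hSpos.ne']
      · intro i hi
        exact div_nonneg (hsT i hi).le hS0
    -- rewrite RHS as (∏ N i) ^ S⁻¹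
    have hrhs : (∏ i ∈ Finset.univ.filter (fun i => p i = 1), M i ^ S⁻¹) *
          ∏ i ∈ T, (∫⁻ x, (v i x)⁻¹ ^ (s i)⁻¹ ∂μ) ^ (s i / S) = (∏ i, N i) ^ S⁻¹ := by
      rw [← ENNReal.prod_rpow_of_nonneg (by positivity : (0:ℝ) ≤ S⁻¹),
        ← Finset.prod_filter_mul_prod_filter_not Finset.univ (fun i => p i = 1)
          (fun i => N i ^ S⁻¹)]
      congr 1
      · refine Finset.prod_congr rfl fun i hi => ?_
        rw [Finset.mem_filter] at hi
        rw [hN1 i hi.2]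
      · refine Finset.prod_congr rfl fun i hi => ?_
        rw [hNT i hi, ← ENNReal.rpow_mul, div_eq_mul_inv]
    rw [hrhs] at hint
    -- conclude
    have hfin : μ Set.univ ≤ (E * ∏ i, N i) ^ S⁻¹ := by
      have := mul_le_mul_right hint (E ^ S⁻¹)
      rw [← mul_assoc, ← ENNReal.mul_rpow_of_nonneg _ _ (by positivity),
        ENNReal.mul_inv_cancel hE0 hEt, ENNReal.one_rpow, one_mul] at this
      rw [ENNReal.mul_rpow_of_nonneg _ _ (by positivity)]
      exact this
    calc μ Set.univ ^ S ≤ ((E * ∏ i, N i) ^ S⁻¹) ^ S :=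
          ENNReal.rpow_le_rpow hfin hS0
    _ = E * ∏ i, N i := by
        rw [← ENNReal.rpow_mul, inv_mul_cancel₀ hSpos.ne', ENNReal.rpow_one]

end ForcesDelta
end HolderForcesDelta

/-- Lemma 1.3: if the `m`-tuple of weights `v⃗` (with `w = ∏ vᵢ`) belongs to
`H_m(p⃗, β, δ̃)` with finite nonzero left-hand side on every ball, then `δ̃ = β - n/p`. -/
theorem equal_weights_forces_delta
    (n m : ℕ) (hn : 1 ≤ n) (hm : 1 ≤ m) (δ δt : ℝ)
    (β : Fin m → ℝ) (hβ : ∀ i, 0 < β i ∧ β i < n)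
    (p : Fin m → ℝ≥0∞) (hp : ∀ i, 1 ≤ p i)
    (v : Fin m → Rn n → ℝ≥0∞) (hv : ∀ i, IsWeight n (v i))
    (hH : MemHm n m δ δt β p (fun x => ∏ i, v i x) v)
    (hLHS : ∀ (c : Rn n) (R : ℝ), 0 < R →
      0 < HmLHS n m δ δt β p (fun x => ∏ i, v i x) v c R ∧
        HmLHS n m δ δt β p (fun x => ∏ i, v i x) v c R < ∞) :
    δt = (∑ i, β i) - (n : ℝ) * (∑ i, (p i)⁻¹).toReal := by
  classical
  obtain ⟨C, hC, hCb⟩ := hH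
  have hnR : (0:ℝ) < n := by exact_mod_cast Nat.lt_of_lt_of_le Nat.zero_lt_one hn
  have hmR : (0:ℝ) < m := by exact_mod_cast Nat.lt_of_lt_of_le Nat.zero_lt_one hm
  set ω₀ : ℝ := (volume (ball (0 : Rn n) 1)).toReal with hω₀def
  have hωpos : 0 < ω₀ := ENNReal.toReal_pos (measure_ball_pos _ _ one_pos).ne'
    measure_ball_lt_top.ne
  set κ : ℝ := ω₀ ^ (n:ℝ)⁻¹ with hκdef
  have hκpos : 0 < κ := Real.rpow_pos_of_pos hωpos _
  set t : Fin m → ℝ := fun i => -((n:ℝ) - β i + δ / (m:ℝ)) with htdef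
  set mc : Fin m → ℝ := fun i => min (κ ^ t i) ((κ + 1) ^ t i) with hmcdef
  have hmcpos : ∀ i, 0 < mc i := fun i =>
    lt_min (Real.rpow_pos_of_pos hκpos _) (Real.rpow_pos_of_pos (by linarith) _)
  set s : Fin m → ℝ := fun i => 1 - ((p i)⁻¹).toReal with hsdef
  set S : ℝ := ∑ i, s i with hSdef
  set γ : ℝ := (δt - δ) / n with hγdef
  set P : ℝ := ∑ i, ((p i)⁻¹).toReal with hPdef
  have hPsum : (∑ i, (p i)⁻¹).toReal = P := by
    rw [hPdef]
    exact ENNReal.toReal_sum fun i _ => by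
      simp only [Ne, ENNReal.inv_eq_top]
      exact (lt_of_lt_of_le zero_lt_one (hp i)).ne'
  set c' : ℝ := (∏ i, mc i) * (ω₀ ^ (-γ) * ω₀ ^ S) with hc'def
  have hc'pos : 0 < c' := by
    apply mul_pos (Finset.prod_pos fun i _ => hmcpos i)
    exact mul_pos (Real.rpow_pos_of_pos hωpos _) (Real.rpow_pos_of_pos hωpos _)
  set e : ℝ := (∑ i, β i) - (n:ℝ) * P - δt with hedef
  -- main estimate
  have hmain : ∀ R : ℝ, 0 < R → ENNReal.ofReal (c' * R ^ e) ≤ C := by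
    intro R hR
    set c : Rn n := 0 with hcdef
    set W : ℝ := R ^ (n:ℝ) * ω₀ with hWdef
    have hWpos : 0 < W := mul_pos (Real.rpow_pos_of_pos hR _) hωpos
    have hVol : volume (ball c R) = ENNReal.ofReal W := by
      rw [hWdef, ENNReal.ofReal_mul (by positivity), hω₀def,
        ENNReal.ofReal_toReal measure_ball_lt_top.ne,
        Measure.addHaar_ball_of_pos volume c hR]
      congr 2
      rw [← Real.rpow_natCast R (Module.finrank ℝ (Rn n))]
      congr 1
      simp [finrank_euclideanSpace]
    have hV14 : (volume (ball c R)) ^ ((n:ℝ)⁻¹) = ENNReal.ofReal (κ * R) := by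
      rw [hVol, ENNReal.ofReal_rpow_of_pos hWpos]
      congr 1
      rw [hWdef, Real.mul_rpow (by positivity) hωpos.le, ← Real.rpow_mul hR.le,
        mul_inv_cancel₀ hnR.ne', Real.rpow_one, mul_comm, hκdef]
    set E := essSup (fun x => ∏ i, v i x) (volume.restrict (ball c R)) with hEdef
    set X : ℝ≥0∞ := volume (ball c R) ^ γ with hXdef
    set G : Fin m → ℝ≥0∞ := fun i => HmFactor n m δ β p v c R i with hGdef
    have hLHSeq : HmLHS n m δ δt β p (fun x => ∏ i, v i x) v c R = E / X * ∏ i, G i := rfl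
    obtain ⟨h0, hfin⟩ := hLHS c R hR
    rw [hLHSeq] at h0 hfin
    have hXoR : X = ENNReal.ofReal (W ^ γ) := by
      rw [hXdef, hVol, ENNReal.ofReal_rpow_of_pos hWpos]
    have hX0 : X ≠ 0 := by
      rw [hXoR]
      exact (ENNReal.ofReal_pos.mpr (Real.rpow_pos_of_pos hWpos _)).ne'
    have hXt : X ≠ ∞ := by rw [hXoR]; exact ENNReal.ofReal_ne_top
    have hG0 : (∏ i, G i) ≠ 0 := by
      intro h; rw [h, mul_zero] at h0; exact lt_irrefl 0 h0
    have hE0 : E ≠ 0 := by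
      intro h
      rw [h, ENNReal.zero_div, zero_mul] at h0
      exact lt_irrefl 0 h0
    have hEt : E ≠ ∞ := by
      intro h
      rw [h, ENNReal.top_div_of_lt_top hXt.lt_top, ENNReal.top_mul hG0] at hfin
      exact lt_irrefl _ hfin
    set N : Fin m → ℝ≥0∞ := fun i =>
      LpNormE (volume.restrict (ball c R)) (fun y => (v i y)⁻¹) (conjE (p i)) with hNdef
    have hGi : ∀ i, ENNReal.ofReal (mc i * R ^ t i) * N i ≤ G i := by
      intro i
      have hK : ∀ y ∈ ball c R, ENNReal.ofReal (mc i * R ^ t i) ≤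
          ((volume (ball c R)) ^ ((n:ℝ)⁻¹) + edist c y) ^ (t i) := by
        intro y hy
        rw [hV14]
        have hd : dist c y < R := mem_ball'.mp hy
        have hd0 : 0 ≤ dist c y := dist_nonneg
        rw [edist_dist, ← ENNReal.ofReal_add (by positivity) hd0,
          ENNReal.ofReal_rpow_of_pos (by positivity)]
        apply ENNReal.ofReal_le_ofReal
        rcases le_or_gt 0 (t i) with ht | ht
        · calc mc i * R ^ t i ≤ κ ^ t i * R ^ t i :=
              mul_le_mul_of_nonneg_right (min_le_left _ _) (Real.rpow_nonneg hR.le _)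
          _ = (κ * R) ^ t i := (Real.mul_rpow hκpos.le hR.le).symm
          _ ≤ (κ * R + dist c y) ^ t i :=
              Real.rpow_le_rpow (by positivity) (by linarith) ht
        · calc mc i * R ^ t i ≤ (κ+1) ^ t i * R ^ t i :=
              mul_le_mul_of_nonneg_right (min_le_right _ _) (Real.rpow_nonneg hR.le _)
          _ = ((κ+1) * R) ^ t i := (Real.mul_rpow (by linarith) hR.le).symm
          _ ≤ (κ * R + dist c y) ^ t i :=
              Real.rpow_le_rpow_of_nonpos (by positivity) (by nlinarith) ht.le
      exact ForcesDelta.factor_lb volume measurableSet_ball (fun y => (v i y)⁻¹)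
        (fun y => ((volume (ball c R)) ^ ((n:ℝ)⁻¹) + edist c y) ^ (t i))
        (ForcesDelta.conjE_one_le (hp i)) ENNReal.ofReal_ne_top hK
    have hball0 : volume (ball c R) ≠ 0 := (measure_ball_pos _ _ hR).ne'
    have hHolder : (volume (ball c R)) ^ S ≤ E * ∏ i, N i := by
      have h := ForcesDelta.holder_core (volume.restrict (ball c R))
        (by rw [Measure.restrict_apply_univ]; exact hball0) p hp v (fun i => (hv i).1)
        (ae_all_iff.mpr fun i => ae_restrict_of_ae (hv i).2.1) hE0 hEt
      rwa [Measure.restrict_apply_univ] at h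
    have hchain : ENNReal.ofReal (c' * R ^ e) ≤ E / X * ∏ i, G i := by
      have h1 : (∏ i, ENNReal.ofReal (mc i * R ^ t i)) * ∏ i, N i ≤ ∏ i, G i := by
        rw [← Finset.prod_mul_distrib]
        exact Finset.prod_le_prod' fun i _ => hGi i
      have h2 : E / X * ((∏ i, ENNReal.ofReal (mc i * R ^ t i)) * ∏ i, N i)
          ≤ E / X * ∏ i, G i := mul_le_mul_right h1 _
      refine le_trans ?_ h2
      have h3 : E / X * ((∏ i, ENNReal.ofReal (mc i * R ^ t i)) * ∏ i, N i)
          = (∏ i, ENNReal.ofReal (mc i * R ^ t i)) * X⁻¹ * (E * ∏ i, N i) := by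
        rw [div_eq_mul_inv]; ring
      rw [h3]
      have h4 : (∏ i, ENNReal.ofReal (mc i * R ^ t i)) * X⁻¹ * ((volume (ball c R)) ^ S)
          ≤ (∏ i, ENNReal.ofReal (mc i * R ^ t i)) * X⁻¹ * (E * ∏ i, N i) :=
        mul_le_mul_right hHolder _
      refine le_trans (le_of_eq ?_) h4
      rw [hVol, ENNReal.ofReal_rpow_of_pos hWpos, hXoR,
        ← ENNReal.ofReal_inv_of_pos (Real.rpow_pos_of_pos hWpos _),
        ← Real.rpow_neg hWpos.le,
        ← ENNReal.ofReal_prod_of_nonneg (fun i _ =>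
          (by positivity : (0:ℝ) ≤ mc i * R ^ t i)),
        ← ENNReal.ofReal_mul (Finset.prod_nonneg fun i _ =>
          (by positivity : (0:ℝ) ≤ mc i * R ^ t i)),
        ← ENNReal.ofReal_mul (mul_nonneg (Finset.prod_nonneg fun i _ =>
          (by positivity : (0:ℝ) ≤ mc i * R ^ t i)) (Real.rpow_nonneg hWpos.le _))]
      congr 1
      -- real computation
      have hm0 : (m:ℝ) ≠ 0 := hmR.ne'
      have hprod : ∏ i, (mc i * R ^ t i) = (∏ i, mc i) * R ^ (∑ i, t i) := by
        rw [Finset.prod_mul_distrib, Real.rpow_sum_of_pos hR t Finset.univ]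
      have hWg : W ^ (-γ) = R ^ ((n:ℝ) * (-γ)) * ω₀ ^ (-γ) := by
        rw [hWdef, Real.mul_rpow (Real.rpow_nonneg hR.le _) hωpos.le, ← Real.rpow_mul hR.le]
      have hWS : W ^ S = R ^ ((n:ℝ) * S) * ω₀ ^ S := by
        rw [hWdef, Real.mul_rpow (Real.rpow_nonneg hR.le _) hωpos.le, ← Real.rpow_mul hR.le]
      have hts : ∑ i, t i = (∑ i, β i) - (m:ℝ)*(n:ℝ) - δ := by
        have h1 : ∀ i : Fin m, t i = β i - ((n:ℝ) + δ/(m:ℝ)) := fun i => by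
          rw [htdef]; ring
        rw [Finset.sum_congr rfl fun i _ => h1 i, Finset.sum_sub_distrib, Finset.sum_const,
          Finset.card_univ, Fintype.card_fin, nsmul_eq_mul]
        field_simp
        ring
      have hSS : S = (m:ℝ) - P := by
        rw [hSdef, hPdef, hsdef, Finset.sum_sub_distrib, Finset.sum_const,
          Finset.card_univ, Fintype.card_fin, nsmul_eq_mul, mul_one]
      have hγγ : (n:ℝ) * γ = δt - δ := by
        rw [hγdef]; field_simp
      have hRe : R ^ e = R ^ (∑ i, t i) * R ^ ((n:ℝ) * (-γ)) * R ^ ((n:ℝ) * S) := by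
        rw [← Real.rpow_add hR, ← Real.rpow_add hR]
        congr 1
        rw [hedef, hts, hSS]
        have : (n:ℝ) * (-γ) = -(δt - δ) := by rw [← hγγ]; ring
        rw [this]
        ring
      rw [hprod, hWg, hWS, hc'def, hRe]
      ring
    exact hchain.trans (hLHSeq ▸ hCb c R hR)
  have he0 : e = 0 := ForcesDelta.exponent_eq_zero hc'pos hC hmain
  rw [hPsum]
  have h2 : (∑ i, β i) - (n:ℝ) * P - δt = 0 := by rw [← hedef]; exact he0
  linarith
end

section
/- Let p⃗=(p_1,…,p_m) be a vector of exponents, 0<q<∞, and w⃗=(w_1,…,w_m) weights on ℝ^n. Assume that 1/p_i + 1/(mq) − 1/(mp) > 0 for every 1 ≤ i ≤ m. Define λ_m = 1/(mp)' + 1/(mq) (with 1/(mp)' = 1 − 1/(mp)), set ℓ_i = 1 if p_i = 1 and ℓ_i = (λ_m p_i')' if p_i > 1, define ℓ by 1/ℓ = Σ_{i=1}^m 1/ℓ_i, and set z_i = w_i^{q ℓ_i / ℓ} for each i. Then w⃗ ∈ A_{p⃗,q} if and only if z⃗=(z_1,…,z_m) ∈ A_{ℓ⃗} where ℓ⃗=(ℓ_1,…,ℓ_m).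 -/
open MeasureTheory Metric Set
open scoped ENNReal NNReal BigOperators
open scoped Classical

/-- Lemma 3.3: relation between the classes `A_{p⃗,q}` and `A_{ℓ⃗}`:
`w⃗ ∈ A_{p⃗,q}` if and only if `z⃗ ∈ A_{ℓ⃗}`, where `ℓᵢ = 1` if `pᵢ = 1`,
`ℓᵢ = (λ_m pᵢ')'` otherwise, and `zᵢ = wᵢ^{q ℓᵢ / ℓ}`. -/
theorem Apq_iff_Avec
    (n m : ℕ) (hn : 1 ≤ n) (hm : 1 ≤ m)
    (p : Fin m → ℝ≥0∞) (hp : ∀ i, 1 ≤ p i) (q : ℝ) (hq : 0 < q)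
    (w : Fin m → Rn n → ℝ≥0∞) (hw : ∀ i, IsWeight n (w i))
    (invp : ℝ) (hinvp : invp = (∑ j, (p j)⁻¹).toReal)
    (hcond : ∀ i, 0 < ((p i)⁻¹).toReal + 1 / (m * q) - invp / m)
    (lam : ℝ) (hlam : lam = (1 - invp / m) + 1 / (m * q))
    (l : Fin m → ℝ≥0∞)
    (hl : ∀ i, l i = if p i = 1 then 1
      else ENNReal.ofReal ((lam * conjR (p i)) / (lam * conjR (p i) - 1)))
    (z : Fin m → Rn n → ℝ≥0∞)
    (hz : ∀ i x, z i x = w i x ^ (q * (l i).toReal * (∑ j, (l j)⁻¹).toReal)) :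
    MemApq n m p q w ↔ MemAvec n m l z := by
  
  classical
  have hm0 : (0:ℝ) < m := by exact_mod_cast hm
  set A : Fin m → ℝ := fun i => ((p i)⁻¹).toReal with hA
  have hA0 : ∀ i, 0 ≤ A i := fun i => ENNReal.toReal_nonneg
  have hd : ∀ i, 0 < lam - (1 - A i) := by
    intro i
    have := hcond i
    rw [hlam]
    simp only [hA] at this ⊢
    linarith
  have hlam0 : (0:ℝ) < lam := by
    have h1 : A ⟨0, hm⟩ ≤ 1 := by
      have h2 : (p ⟨0, hm⟩)⁻¹ ≤ 1 := ENNReal.inv_le_one.mpr (hp _)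
      have := ENNReal.toReal_mono ENNReal.one_ne_top h2
      simpa [hA] using this
    have := hd ⟨0, hm⟩
    linarith
  have hAeq1 : ∀ i, p i = 1 → A i = 1 := by
    intro i hi; simp [hA, hi]
  have hAlt1 : ∀ i, p i ≠ 1 → A i < 1 := by
    intro i hi
    have h1 : (p i)⁻¹ < 1 := ENNReal.inv_lt_one.mpr (lt_of_le_of_ne (hp i) (Ne.symm hi))
    have := (ENNReal.toReal_lt_toReal (h1.trans_le le_top).ne ENNReal.one_ne_top).mpr h1
    simpa [hA] using this
  have hconjRp : ∀ i, p i ≠ 1 → conjR (p i) = 1 / (1 - A i) := by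
    intro i hi
    by_cases htop : p i = ∞
    · have hAi : A i = 0 := by simp [hA, htop]
      simp [conjR, htop, hAi]
    · have ht1 : 1 < (p i).toReal := by
        have := (ENNReal.toReal_lt_toReal ENNReal.one_ne_top htop).mpr
          (lt_of_le_of_ne (hp i) (Ne.symm hi))
        simpa using this
      have hAi : A i = ((p i).toReal)⁻¹ := by simp [hA]
      have ht0 : (p i).toReal ≠ 0 := by linarith
      rw [conjR, if_neg htop, hAi]
      field_simp
  -- toReal of l
  have hlval : ∀ i, l i = ENNReal.ofReal (lam / (lam - (1 - A i))) := by
    intro i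
    by_cases hi : p i = 1
    · have hA1 : A i = 1 := hAeq1 i hi
      rw [hl i, if_pos hi, hA1]
      rw [show lam / (lam - (1 - 1)) = 1 by rw [sub_self, sub_zero, div_self hlam0.ne']]
      simp
    · have hb : 0 < 1 - A i := by have := hAlt1 i hi; linarith
      rw [hl i, if_neg hi, hconjRp i hi]
      congr 1
      have hdb := hd i
      field_simp
  have hlpos : ∀ i, 0 < lam / (lam - (1 - A i)) := fun i => div_pos hlam0 (hd i)
  have hltoReal : ∀ i, (l i).toReal = lam / (lam - (1 - A i)) := by
    intro i; rw [hlval i, ENNReal.toReal_ofReal (hlpos i).le]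
  have hlne0 : ∀ i, l i ≠ 0 := by
    intro i; rw [hlval i]; simpa using (hlpos i)
  have hlnetop : ∀ i, l i ≠ ∞ := by intro i; rw [hlval i]; exact ENNReal.ofReal_ne_top
  have hinvp' : invp = ∑ j, A j := by
    rw [hinvp, ENNReal.toReal_sum]
    intro a _
    exact ENNReal.inv_ne_top.mpr (by intro h; exact absurd (hp a) (by simp [h]))
  have hS : (∑ j, (l j)⁻¹).toReal = 1 / (q * lam) := by
    rw [ENNReal.toReal_sum (fun a _ => ENNReal.inv_ne_top.mpr (hlne0 a))]
    have h1 : ∀ j : Fin m, ((l j)⁻¹).toReal = (lam - 1) / lam + A j / lam := by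
      intro j
      rw [ENNReal.toReal_inv, hltoReal j]
      have := hd j
      field_simp
      ring
    rw [Finset.sum_congr rfl (fun j _ => h1 j)]
    rw [Finset.sum_add_distrib, Finset.sum_const, Finset.card_univ, Fintype.card_fin, nsmul_eq_mul,
      ← Finset.sum_div, ← hinvp']
    have hq0 : q ≠ 0 := hq.ne'
    have hl0 : lam ≠ 0 := hlam0.ne'
    have hm' : (m:ℝ) ≠ 0 := hm0.ne'
    have hnum : (m:ℝ) * (lam - 1) + invp = 1 / q := by
      rw [hlam]; field_simp; ring
    have h3 : (m:ℝ) * ((lam - 1) / lam) + invp / lam = ((m:ℝ) * (lam - 1) + invp) / lam := by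
      ring
    rw [h3, hnum, div_div]
  have hSpos : 0 < (∑ j, (l j)⁻¹).toReal := by
    rw [hS]; positivity
  have hl1iff : ∀ i, (l i = 1 ↔ p i = 1) := by
    intro i
    constructor
    · intro h
      by_contra hi
      have hb : 0 < 1 - A i := by have := hAlt1 i hi; linarith
      have : (1:ℝ≥0∞) < l i := by
        rw [hlval i, ENNReal.one_lt_ofReal]
        rw [lt_div_iff₀ (hd i)]
        linarith
      exact absurd h this.ne'
    · intro h; rw [hl i, if_pos h]
  have hconjRl : ∀ i, p i ≠ 1 → conjR (l i) = lam / (1 - A i) := by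
    intro i hi
    have hb : 0 < 1 - A i := by have := hAlt1 i hi; linarith
    rw [conjR, if_neg (hlnetop i), hltoReal i]
    have hdb := hd i
    rw [show lam / (lam - (1 - A i)) - 1 = (1 - A i) / (lam - (1 - A i)) by field_simp; ring]
    rw [div_div_div_cancel_right₀ (hd i).ne']
  -- the exponent in hz
  have hexp : ∀ i, q * (l i).toReal * (∑ j, (l j)⁻¹).toReal = (lam - (1 - A i))⁻¹ := by
    intro i
    rw [hltoReal i, hS]
    have := hd i
    have hq0 : q ≠ 0 := hq.ne'
    field_simp
  -- key identity over every ball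
  have key : ∀ (c : Rn n) (R : ℝ), 0 < R →
      ((volume (ball c R))⁻¹ *
          ∫⁻ x in ball c R, ∏ i, z i x ^ ((∑ j, (l j)⁻¹).toReal⁻¹ * ((l i)⁻¹).toReal)) ^
          (∑ j, (l j)⁻¹).toReal *
        ∏ i, (if l i = 1 then essSup (fun x => (z i x)⁻¹) (volume.restrict (ball c R))
          else ((volume (ball c R))⁻¹ * ∫⁻ x in ball c R, z i x ^ (1 - conjR (l i))) ^
            (conjR (l i))⁻¹) =
      (((volume (ball c R))⁻¹ * ∫⁻ x in ball c R, ∏ i, w i x ^ q) ^ (1 / q) *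
        ∏ i, (if p i = 1 then essSup (fun x => (w i x)⁻¹) (volume.restrict (ball c R))
          else ((volume (ball c R))⁻¹ * ∫⁻ x in ball c R, (w i x)⁻¹ ^ conjR (p i)) ^
            (conjR (p i))⁻¹)) ^ lam⁻¹ := by
    intro c R hR
    have hlaminv : (0:ℝ) ≤ lam⁻¹ := by positivity
    rw [ENNReal.mul_rpow_of_nonneg _ _ hlaminv, ← ENNReal.prod_rpow_of_nonneg hlaminv]
    congr 1
    · -- first factor
      have hint : ∫⁻ x in ball c R,
          ∏ i, z i x ^ ((∑ j, (l j)⁻¹).toReal⁻¹ * ((l i)⁻¹).toReal) =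
          ∫⁻ x in ball c R, ∏ i, w i x ^ q := by
        refine lintegral_congr fun x => Finset.prod_congr rfl fun i _ => ?_
        rw [hz i x, ← ENNReal.rpow_mul]
        congr 1
        rw [hexp i, hS, ENNReal.toReal_inv, hltoReal i]
        have := hd i
        have hq0 : q ≠ 0 := hq.ne'
        have hl0 : lam ≠ 0 := hlam0.ne'
        field_simp
      rw [hint, ← ENNReal.rpow_mul]
      congr 1
      rw [hS]
      field_simp
    · -- the product of factors
      refine Finset.prod_congr rfl fun i _ => ?_
      by_cases hi : p i = 1
      · rw [if_pos hi, if_pos ((hl1iff i).mpr hi)]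
        have he : q * (l i).toReal * (∑ j, (l j)⁻¹).toReal = lam⁻¹ := by
          rw [hexp i, hAeq1 i hi]
          norm_num
        have hiso := OrderIso.essSup_apply (fun x => (w i x)⁻¹)
          (volume.restrict (ball c R)) (ENNReal.orderIsoRpow lam⁻¹ (by positivity))
        simp only [ENNReal.orderIsoRpow_apply] at hiso
        rw [hiso]
        congr 1
        funext x
        rw [hz i x, he, ← ENNReal.inv_rpow]
      · rw [if_neg hi, if_neg (fun h => hi ((hl1iff i).mp h))]
        have hb : 0 < 1 - A i := by have := hAlt1 i hi; linarith
        have hbexp : q * (l i).toReal * (∑ j, (l j)⁻¹).toReal * (1 - conjR (l i)) =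
            -conjR (p i) := by
          rw [hexp i, hconjRl i hi, hconjRp i hi]
          have := hd i
          field_simp
          ring
        have hout : (conjR (l i))⁻¹ = (conjR (p i))⁻¹ * lam⁻¹ := by
          rw [hconjRl i hi, hconjRp i hi]
          have hl0 : lam ≠ 0 := hlam0.ne'
          field_simp
        have hint : ∫⁻ x in ball c R, z i x ^ (1 - conjR (l i)) =
            ∫⁻ x in ball c R, (w i x)⁻¹ ^ conjR (p i) := by
          refine lintegral_congr fun x => ?_
          rw [hz i x, ← ENNReal.rpow_mul, hbexp, ENNReal.rpow_neg, ENNReal.inv_rpow]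
        rw [hint, hout, ENNReal.rpow_mul]
    done
  constructor
  · rintro ⟨C, hC, h⟩
    refine ⟨C ^ lam⁻¹, ENNReal.rpow_ne_top_of_nonneg (by positivity) hC, ?_⟩
    intro c R hR
    rw [key c R hR]
    exact ENNReal.rpow_le_rpow (h c R hR) (by positivity)
  · rintro ⟨C, hC, h⟩
    refine ⟨C ^ lam, ENNReal.rpow_ne_top_of_nonneg hlam0.le hC, ?_⟩
    intro c R hR
    have h2 := h c R hR
    rw [key c R hR] at h2
    have h3 := ENNReal.rpow_le_rpow h2 hlam0.le
    rw [← ENNReal.rpow_mul, inv_mul_cancel₀ hlam0.ne', ENNReal.rpow_one] at h3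
    exact h3
end

section
/- Fix δ ∈ ℝ. Let 0<β<mn, δ̃ ∈ ℝ, p⃗ a vector of exponents, a splitting β = Σ β_i with 0<β_i<n, and let (w,v⃗) be a pair of weights such that v_i^{−1} ∈ RH_∞ for every i with p_i = 1 and v_i^{−p_i'} is a doubling weight for every i with 1<p_i≤∞. Then (w,v⃗) belongs to H_m(p⃗,β,δ̃) if and only if (w,v⃗) satisfies the global condition. -/
open MeasureTheory Metric Set
open scoped ENNReal NNReal BigOperators
open scoped Classical

noncomputable section HmAuxSec
namespace HmAux

open MeasureTheory Metric Set
open scoped ENNReal NNReal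

/-! ### ENNReal rpow helpers -/

lemma rpow_ne_zero' {x : ℝ≥0∞} (h0 : x ≠ 0) (ht : x ≠ ∞) (e : ℝ) : x ^ e ≠ 0 := by
  simp [ENNReal.rpow_eq_zero_iff, h0, ht]

lemma rpow_ne_top' {x : ℝ≥0∞} (h0 : x ≠ 0) (ht : x ≠ ∞) (e : ℝ) : x ^ e ≠ ∞ := by
  simp [ENNReal.rpow_eq_top_iff, h0, ht]

lemma rpow_neg_mul_rpow {x : ℝ≥0∞} (hx0 : x ≠ 0) (hx : x ≠ ∞) (e : ℝ) :
    x ^ (-e) * x ^ e = 1 := by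
  rw [ENNReal.rpow_neg]
  exact ENNReal.inv_mul_cancel (rpow_ne_zero' hx0 hx e) (rpow_ne_top' hx0 hx e)

lemma rpow_mul_rpow_neg {x : ℝ≥0∞} (hx0 : x ≠ 0) (hx : x ≠ ∞) (e : ℝ) :
    x ^ e * x ^ (-e) = 1 := by
  rw [mul_comm]; exact rpow_neg_mul_rpow hx0 hx e

lemma rpow_anti {x y : ℝ≥0∞} {e : ℝ} (he : e ≤ 0) (h : x ≤ y) : y ^ e ≤ x ^ e := by
  have h2 : (y ^ (-e))⁻¹ ≤ (x ^ (-e))⁻¹ :=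
    ENNReal.inv_le_inv.2 (ENNReal.rpow_le_rpow h (neg_nonneg.2 he))
  rwa [← ENNReal.rpow_neg, ← ENNReal.rpow_neg, neg_neg] at h2

lemma rpow_between {y x t : ℝ≥0∞} (e : ℝ)
    (h1 : y ≤ x) (h2 : x ≤ t * y) : x ^ e ≤ max 1 (t ^ e) * y ^ e := by
  rcases le_or_gt 0 e with he | he
  · calc x ^ e ≤ (t * y) ^ e := ENNReal.rpow_le_rpow h2 he
    _ = t ^ e * y ^ e := ENNReal.mul_rpow_of_nonneg _ _ he
    _ ≤ max 1 (t ^ e) * y ^ e := mul_le_mul_left (le_max_right _ _) _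
  · calc x ^ e ≤ y ^ e := rpow_anti he.le h1
    _ = 1 * y ^ e := (one_mul _).symm
    _ ≤ max 1 (t ^ e) * y ^ e := mul_le_mul_left (le_max_left _ _) _

lemma le_mul_of_inv {a b M : ℝ≥0∞} (hM0 : M ≠ 0) (hM : M ≠ ∞) (h : a ≤ M * b) :
    b⁻¹ ≤ M * a⁻¹ := by
  have h2 := ENNReal.inv_le_inv.2 h
  rw [ENNReal.mul_inv (Or.inl hM0) (Or.inl hM)] at h2
  calc b⁻¹ = M * (M⁻¹ * b⁻¹) := by
        rw [← mul_assoc, ENNReal.mul_inv_cancel hM0 hM, one_mul]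
  _ ≤ M * a⁻¹ := mul_le_mul_right h2 _

lemma rpow_between' {y x t : ℝ≥0∞} (e : ℝ) (ht0 : t ≠ 0) (ht : t ≠ ∞)
    (h1 : y ≤ x) (h2 : x ≤ t * y) : y ^ e ≤ max 1 (t ^ (-e)) * x ^ e := by
  rcases le_or_gt 0 e with he | he
  · calc y ^ e ≤ x ^ e := ENNReal.rpow_le_rpow h1 he
    _ = 1 * x ^ e := (one_mul _).symm
    _ ≤ _ := mul_le_mul_left (le_max_left _ _) _
  · have hb := rpow_between (-e) h1 h2
    have hM : max 1 (t ^ (-e)) ≠ ∞ := by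
      simp [ENNReal.rpow_ne_top_of_nonneg (neg_nonneg.2 he.le) ht]
    have h3 := le_mul_of_inv (by simp) hM hb
    have hy' : y ^ e = (y ^ (-e))⁻¹ := by rw [← ENNReal.rpow_neg, neg_neg]
    have hx' : x ^ e = (x ^ (-e))⁻¹ := by rw [← ENNReal.rpow_neg, neg_neg]
    rw [hy', hx']
    exact h3

/-! ### essSup and lintegral helpers -/

lemma essSup_restrict_mono_set {α : Type*} [MeasurableSpace α] (μ : Measure α)
    (f : α → ℝ≥0∞) {s t : Set α} (h : s ⊆ t) :
    essSup f (μ.restrict s) ≤ essSup f (μ.restrict t) :=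
  essSup_mono_measure' (Measure.restrict_mono h le_rfl)

lemma essSup_split {α : Type*} [MeasurableSpace α] (μ : Measure α)
    (f : α → ℝ≥0∞) {s : Set α} (hs : MeasurableSet s) :
    essSup f μ ≤ essSup f (μ.restrict s) + essSup f (μ.restrict sᶜ) := by
  classical
  have h : essSup f μ = max (essSup f (μ.restrict s)) (essSup f (μ.restrict sᶜ)) := by
    rw [← ENNReal.essSup_piecewise (f := f) (g := f) hs, Set.piecewise_same]
  rw [h]
  exact max_le le_self_add le_add_self

lemma setLIntegral_le_essSup_mul {α : Type*} [MeasurableSpace α] (μ : Measure α)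
    (f : α → ℝ≥0∞) (s : Set α) :
    ∫⁻ x in s, f x ∂μ ≤ essSup f (μ.restrict s) * μ s := by
  calc ∫⁻ x in s, f x ∂μ ≤ ∫⁻ _ in s, essSup f (μ.restrict s) ∂μ :=
        lintegral_mono_ae (ENNReal.ae_le_essSup f)
  _ = essSup f (μ.restrict s) * μ s := setLIntegral_const s _

/-! ### LpNormE lemmas -/

lemma LpNormE_mono_ae {α : Type*} [MeasurableSpace α] (μ : Measure α) {f g : α → ℝ≥0∞}
    (h : f ≤ᵐ[μ] g) (q : ℝ≥0∞) : LpNormE μ f q ≤ LpNormE μ g q := by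
  unfold LpNormE
  split_ifs
  · exact essSup_mono_ae h
  · exact ENNReal.rpow_le_rpow
      (lintegral_mono_ae (h.mono fun x hx => ENNReal.rpow_le_rpow hx ENNReal.toReal_nonneg))
      (by positivity)

lemma LpNormE_mono_measure {α : Type*} [MeasurableSpace α] {μ ν : Measure α} (h : μ ≤ ν)
    (f : α → ℝ≥0∞) (q : ℝ≥0∞) : LpNormE μ f q ≤ LpNormE ν f q := by
  unfold LpNormE
  split_ifs
  · exact essSup_mono_measure' h
  · exact ENNReal.rpow_le_rpow (lintegral_mono' h le_rfl) (by positivity)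

lemma LpNormE_const_mul {α : Type*} [MeasurableSpace α] (μ : Measure α) (f : α → ℝ≥0∞)
    {a : ℝ≥0∞} (ha : a ≠ ∞) {q : ℝ≥0∞} (hq : q ≠ ∞ → 0 < q.toReal) :
    LpNormE μ (fun x => a * f x) q = a * LpNormE μ f q := by
  unfold LpNormE
  split_ifs with h
  · exact ENNReal.essSup_const_mul
  · have hs := hq h
    simp_rw [ENNReal.mul_rpow_of_nonneg _ _ (ENNReal.toReal_nonneg (a := q))]
    rw [lintegral_const_mul' _ _ (ENNReal.rpow_ne_top_of_nonneg ENNReal.toReal_nonneg ha),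
      ENNReal.mul_rpow_of_nonneg _ _ (by positivity), ← ENNReal.rpow_mul,
      mul_one_div, div_self hs.ne', ENNReal.rpow_one]

lemma LpNormE_split {α : Type*} [MeasurableSpace α] (μ : Measure α) (f : α → ℝ≥0∞)
    {s : Set α} (hs : MeasurableSet s) {q : ℝ≥0∞} (hq : q ≠ ∞ → 1 ≤ q.toReal) :
    LpNormE μ f q ≤ LpNormE (μ.restrict s) f q + LpNormE (μ.restrict sᶜ) f q := by
  unfold LpNormE
  split_ifs with h
  · exact essSup_split μ f hs
  · have hs1 := hq h
    rw [← lintegral_add_compl (fun x => f x ^ q.toReal) hs]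
    exact ENNReal.rpow_add_le_add_rpow _ _ (by positivity)
      (by rw [div_le_one (by linarith)]; exact hs1)

lemma LpNormE_restrict_const_mul_le {α : Type*} [MeasurableSpace α] (μ : Measure α)
    {s : Set α} (hs : MeasurableSet s) {f g : α → ℝ≥0∞} {M : ℝ≥0∞} (hM : M ≠ ∞)
    (h : ∀ x ∈ s, f x ≤ M * g x) {q : ℝ≥0∞} (hq : q ≠ ∞ → 0 < q.toReal) :
    LpNormE (μ.restrict s) f q ≤ M * LpNormE (μ.restrict s) g q :=
  (LpNormE_mono_ae _ (ae_restrict_of_forall_mem hs h) q).trans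
    (le_of_eq (LpNormE_const_mul _ _ hM hq))

lemma ae_contra {α : Type*} [MeasurableSpace α] {μ : Measure α}
    (h : ∀ᵐ _x ∂μ, False) : μ Set.univ = 0 := by
  have := (ae_iff (μ := μ) (p := fun _ => False)).1 h
  simpa using this

lemma LpNormE_pos {α : Type*} [MeasurableSpace α] (μ : Measure α) {g : α → ℝ≥0∞}
    (hg : Measurable g) {s b : Set α} (hb : MeasurableSet b) (hbs : b ⊆ s)
    (hbpos : 0 < μ b) (hgpos : ∀ᵐ x ∂μ, x ∈ b → 0 < g x) {q : ℝ≥0∞}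
    (hq : q ≠ ∞ → 0 < q.toReal) : 0 < LpNormE (μ.restrict s) g q := by
  have hres : μ.restrict b ≤ μ.restrict s := Measure.restrict_mono hbs le_rfl
  have hposb : ∀ᵐ x ∂μ.restrict b, 0 < g x := by
    filter_upwards [ae_restrict_of_ae hgpos, ae_restrict_mem hb] with x h1 h2 using h1 h2
  unfold LpNormE
  split_ifs with h
  · rw [pos_iff_ne_zero]
    intro h0
    have hz : g =ᵐ[μ.restrict b] 0 :=
      (ENNReal.essSup_eq_zero_iff.1 h0).filter_mono (ae_mono hres)
    have : ∀ᵐ _x ∂μ.restrict b, False := by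
      filter_upwards [hz, hposb] with x h1 h2
      exact absurd h1 h2.ne'
    have h2 := ae_contra this
    rw [Measure.restrict_apply_univ] at h2
    exact hbpos.ne' h2
  · have hs := hq h
    have hI : 0 < ∫⁻ x, g x ^ q.toReal ∂μ.restrict s := by
      rw [pos_iff_ne_zero]
      intro h0
      have h0b : ∫⁻ x, g x ^ q.toReal ∂μ.restrict b = 0 :=
        le_antisymm (le_trans (lintegral_mono' hres le_rfl) h0.le) zero_le
      have hz : (fun x => g x ^ q.toReal) =ᵐ[μ.restrict b] 0 :=
        (lintegral_eq_zero_iff (hg.pow measurable_const)).1 h0b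
      have : ∀ᵐ _x ∂μ.restrict b, False := by
        filter_upwards [hz, hposb] with x h1 h2
        exact absurd h1 (rpow_ne_zero' h2.ne' (by intro hh; rw [hh] at h1; simp [ENNReal.top_rpow_of_pos hs] at h1) _)
      have h2 := ae_contra this
      rw [Measure.restrict_apply_univ] at h2
      exact hbpos.ne' h2
    rcases eq_or_ne (∫⁻ x, g x ^ q.toReal ∂μ.restrict s) ∞ with hT | hT
    · rw [hT, ENNReal.top_rpow_of_pos (by positivity : (0:ℝ) < 1 / q.toReal)]
      exact ENNReal.zero_lt_top
    · exact ENNReal.rpow_pos hI hT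

/-! ### conjugate exponent lemmas -/

lemma conjE_one : conjE 1 = ∞ := if_pos rfl

lemma conjE_ne_top {q : ℝ≥0∞} (hq : q ≠ 1) : conjE q ≠ ∞ := by
  unfold conjE
  split_ifs with h1 h2
  · exact absurd h1 hq
  · simp
  · simp

lemma toReal_gt_one {q : ℝ≥0∞} (h1 : 1 < q) (h2 : q ≠ ∞) : 1 < q.toReal := by
  have := ENNReal.toReal_strict_mono h2 h1
  simpa using this

lemma one_le_conjR {q : ℝ≥0∞} (hq1 : 1 < q) : 1 ≤ conjR q := by
  unfold conjR
  split_ifs with h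
  · exact le_refl 1
  · have ht := toReal_gt_one hq1 h
    rw [le_div_iff₀ (by linarith)]
    linarith

lemma conjE_toReal {q : ℝ≥0∞} (hq1 : 1 < q) : (conjE q).toReal = conjR q := by
  unfold conjE conjR
  rcases eq_or_ne q ∞ with h | h
  · simp [h, hq1.ne']
  · have ht := toReal_gt_one hq1 h
    rw [if_neg hq1.ne', if_neg h, if_neg h, ENNReal.toReal_ofReal]
    exact div_nonneg (by linarith) (by linarith)

lemma conjE_hyp {q : ℝ≥0∞} (hq : 1 ≤ q) : conjE q ≠ ∞ → 1 ≤ (conjE q).toReal := by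
  intro h
  rcases eq_or_lt_of_le hq with h1 | h1
  · exact absurd (h1 ▸ conjE_one) h
  · rw [conjE_toReal h1]
    exact one_le_conjR h1

/-! ### geometry of balls in Rn -/

lemma vol_ball (n : ℕ) (c : Rn n) {R : ℝ} (hR : 0 < R) :
    volume (ball c R) = ENNReal.ofReal (R ^ n) * volume (ball (0 : Rn n) 1) := by
  rw [Measure.addHaar_ball_of_pos _ c hR, finrank_euclideanSpace_fin]

lemma vol_ball_ne_zero (n : ℕ) (c : Rn n) {R : ℝ} (hR : 0 < R) :
    volume (ball c R) ≠ 0 := (measure_ball_pos _ _ hR).ne'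

lemma vol_ball_ne_top (n : ℕ) (c : Rn n) (R : ℝ) : volume (ball c R) ≠ ∞ :=
  measure_ball_lt_top.ne

/-- dimensional constant `κ = |B(0,1)|^{1/n}`. -/
def kap (n : ℕ) : ℝ≥0∞ := volume (ball (0 : Rn n) 1) ^ ((n : ℝ)⁻¹)

lemma kap_ne_zero (n : ℕ) : kap n ≠ 0 :=
  rpow_ne_zero' (vol_ball_ne_zero n 0 one_pos) (vol_ball_ne_top n 0 1) _

lemma kap_ne_top (n : ℕ) : kap n ≠ ∞ :=
  rpow_ne_top' (vol_ball_ne_zero n 0 one_pos) (vol_ball_ne_top n 0 1) _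

lemma r_eq (n : ℕ) (hn : 1 ≤ n) (c : Rn n) {R : ℝ} (hR : 0 < R) :
    volume (ball c R) ^ ((n : ℝ)⁻¹) = kap n * ENNReal.ofReal R := by
  have hn0 : (n : ℝ) ≠ 0 := Nat.cast_ne_zero.2 (by omega)
  rw [vol_ball n c hR, ENNReal.mul_rpow_of_nonneg _ _ (by positivity), mul_comm]
  congr 1
  rw [ENNReal.ofReal_rpow_of_pos (by positivity)]
  congr 1
  rw [← Real.rpow_natCast R n, ← Real.rpow_mul hR.le, mul_inv_cancel₀ hn0, Real.rpow_one]

lemma vol_ball_scale (n : ℕ) (c : Rn n) {R k : ℝ} (hR : 0 < R) (hk : 0 < k) :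
    volume (ball c (k * R)) = ENNReal.ofReal (k ^ n) * volume (ball c R) := by
  rw [vol_ball n c hR, vol_ball n c (by positivity : 0 < k * R), mul_pow,
    ENNReal.ofReal_mul (by positivity), mul_assoc]

/-- the translated center. -/
def transl (n : ℕ) (hn : 1 ≤ n) (c : Rn n) (d : ℝ) : Rn n :=
  c + d • EuclideanSpace.single (⟨0, hn⟩ : Fin n) (1 : ℝ)

lemma dist_transl (n : ℕ) (hn : 1 ≤ n) (c : Rn n) {d : ℝ} (hd : 0 ≤ d) :
    dist c (transl n hn c d) = d := by
  rw [transl, dist_self_add_right, norm_smul, EuclideanSpace.norm_single]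
  simp [abs_of_nonneg hd]

lemma edist_ofReal (n : ℕ) (c y : Rn n) : edist c y = ENNReal.ofReal (dist c y) :=
  edist_dist c y

/-! ### kernel comparison lemmas -/

lemma LpNormE_top {α : Type*} [MeasurableSpace α] (μ : Measure α) (g : α → ℝ≥0∞) :
    LpNormE μ g ∞ = essSup g μ := if_pos rfl

lemma one_add_kap_ne_zero (n : ℕ) : (1 : ℝ≥0∞) + kap n ≠ 0 := by simp

lemma one_add_kap_ne_top (n : ℕ) : (1 : ℝ≥0∞) + kap n ≠ ∞ := by
  simp [ENNReal.add_ne_top, kap_ne_top n]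

/-- Forward comparison: the global factor is controlled by the `H_m` factor. -/
lemma F1 (n : ℕ) (hn : 1 ≤ n) (c : Rn n) {R : ℝ} (hR : 0 < R) (u : Rn n → ℝ≥0∞) (e : ℝ)
    {q : ℝ≥0∞} (hq : q ≠ ∞ → 1 ≤ q.toReal) :
    LpNormE (volume.restrict (ball c R)ᶜ) (fun y => u y * edist c y ^ e) q ≤
      max 1 ((1 + kap n) ^ (-e)) *
        LpNormE volume
          (fun y => u y * (volume (ball c R) ^ (n : ℝ)⁻¹ + edist c y) ^ e) q := by
  have hq0 : q ≠ ∞ → 0 < q.toReal := fun h => lt_of_lt_of_le one_pos (hq h)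
  have hM : max 1 ((1 + kap n) ^ (-e)) ≠ ∞ := by
    have h := rpow_ne_top' (one_add_kap_ne_zero n) (one_add_kap_ne_top n) (-e)
    exact (max_lt ENNReal.one_lt_top h.lt_top).ne
  have key : ∀ y ∈ (ball c R)ᶜ, u y * edist c y ^ e ≤ max 1 ((1 + kap n) ^ (-e)) *
      (u y * (volume (ball c R) ^ (n : ℝ)⁻¹ + edist c y) ^ e) := by
    intro y hy
    have hd : R ≤ dist c y := by
      rw [dist_comm]
      simpa [mem_ball] using hy
    have hρ : ENNReal.ofReal R ≤ edist c y := by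
      rw [edist_ofReal]; exact ENNReal.ofReal_le_ofReal hd
    have hbase : edist c y ^ e ≤ max 1 ((1 + kap n) ^ (-e)) *
        (volume (ball c R) ^ (n : ℝ)⁻¹ + edist c y) ^ e := by
      refine rpow_between' e (one_add_kap_ne_zero n) (one_add_kap_ne_top n) le_add_self ?_
      rw [r_eq n hn c hR, add_mul, one_mul, add_comm (kap n * ENNReal.ofReal R)]
      exact add_le_add_right (mul_le_mul_right hρ _) _
    calc u y * edist c y ^ e
        ≤ u y * (max 1 ((1 + kap n) ^ (-e)) *
            (volume (ball c R) ^ (n : ℝ)⁻¹ + edist c y) ^ e) := mul_le_mul_right hbase _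
      _ = max 1 ((1 + kap n) ^ (-e)) *
            (u y * (volume (ball c R) ^ (n : ℝ)⁻¹ + edist c y) ^ e) := by ring
  exact (LpNormE_restrict_const_mul_le volume measurableSet_ball.compl hM key hq0).trans
    (mul_le_mul_right (LpNormE_mono_measure Measure.restrict_le_self _ _) _)

/-- Backward comparison on the complement of the ball. -/
lemma F2 (n : ℕ) (hn : 1 ≤ n) (c : Rn n) {R : ℝ} (hR : 0 < R) (u : Rn n → ℝ≥0∞) (e : ℝ)
    {q : ℝ≥0∞} (hq : q ≠ ∞ → 1 ≤ q.toReal) :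
    LpNormE (volume.restrict (ball c R)ᶜ)
        (fun y => u y * (volume (ball c R) ^ (n : ℝ)⁻¹ + edist c y) ^ e) q ≤
      max 1 ((1 + kap n) ^ e) *
        LpNormE (volume.restrict (ball c R)ᶜ) (fun y => u y * edist c y ^ e) q := by
  have hq0 : q ≠ ∞ → 0 < q.toReal := fun h => lt_of_lt_of_le one_pos (hq h)
  have hM : max 1 ((1 + kap n) ^ e) ≠ ∞ := by
    have h := rpow_ne_top' (one_add_kap_ne_zero n) (one_add_kap_ne_top n) e
    exact (max_lt ENNReal.one_lt_top h.lt_top).ne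
  refine LpNormE_restrict_const_mul_le volume measurableSet_ball.compl hM ?_ hq0
  intro y hy
  have hd : R ≤ dist c y := by
    rw [dist_comm]
    simpa [mem_ball] using hy
  have hρ : ENNReal.ofReal R ≤ edist c y := by
    rw [edist_ofReal]; exact ENNReal.ofReal_le_ofReal hd
  have hbase : (volume (ball c R) ^ (n : ℝ)⁻¹ + edist c y) ^ e ≤
      max 1 ((1 + kap n) ^ e) * edist c y ^ e := by
    refine rpow_between e le_add_self ?_
    rw [r_eq n hn c hR, add_mul, one_mul, add_comm (kap n * ENNReal.ofReal R)]
    exact add_le_add_right (mul_le_mul_right hρ _) _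
  calc u y * (volume (ball c R) ^ (n : ℝ)⁻¹ + edist c y) ^ e
      ≤ u y * (max 1 ((1 + kap n) ^ e) * edist c y ^ e) := mul_le_mul_right hbase _
    _ = max 1 ((1 + kap n) ^ e) * (u y * edist c y ^ e) := by ring

/-- Flattening the kernel inside the ball. -/
lemma F3 (n : ℕ) (hn : 1 ≤ n) (c : Rn n) {R : ℝ} (hR : 0 < R) (u : Rn n → ℝ≥0∞) (e : ℝ)
    {q : ℝ≥0∞} (hq : q ≠ ∞ → 1 ≤ q.toReal) :
    LpNormE (volume.restrict (ball c R))
        (fun y => u y * (volume (ball c R) ^ (n : ℝ)⁻¹ + edist c y) ^ e) q ≤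
      max 1 ((1 + (kap n)⁻¹) ^ e) * kap n ^ e * ENNReal.ofReal R ^ e *
        LpNormE (volume.restrict (ball c R)) u q := by
  have hq0 : q ≠ ∞ → 0 < q.toReal := fun h => lt_of_lt_of_le one_pos (hq h)
  have hρ0 : ENNReal.ofReal R ≠ 0 := (ENNReal.ofReal_pos.2 hR).ne'
  have hρt : ENNReal.ofReal R ≠ ∞ := ENNReal.ofReal_ne_top
  have hk0 : (1 : ℝ≥0∞) + (kap n)⁻¹ ≠ 0 := by simp
  have hkt : (1 : ℝ≥0∞) + (kap n)⁻¹ ≠ ∞ := by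
    simp [ENNReal.add_ne_top, ENNReal.inv_ne_top.2 (kap_ne_zero n)]
  have hM : max 1 ((1 + (kap n)⁻¹) ^ e) * kap n ^ e * ENNReal.ofReal R ^ e ≠ ∞ := by
    refine ENNReal.mul_ne_top (ENNReal.mul_ne_top ?_ ?_) ?_
    · exact (max_lt ENNReal.one_lt_top (rpow_ne_top' hk0 hkt e).lt_top).ne
    · exact rpow_ne_top' (kap_ne_zero n) (kap_ne_top n) e
    · exact rpow_ne_top' hρ0 hρt e
  refine LpNormE_restrict_const_mul_le volume measurableSet_ball hM ?_ hq0
  intro y hy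
  have hd : dist c y ≤ R := by
    rw [dist_comm]
    exact (mem_ball.1 hy).le
  have hedist : edist c y ≤ ENNReal.ofReal R := by
    rw [edist_ofReal]; exact ENNReal.ofReal_le_ofReal hd
  have hbase : (volume (ball c R) ^ (n : ℝ)⁻¹ + edist c y) ^ e ≤
      max 1 ((1 + (kap n)⁻¹) ^ e) * (volume (ball c R) ^ (n : ℝ)⁻¹) ^ e := by
    refine rpow_between e (le_add_right le_rfl) ?_
    rw [add_mul, one_mul]
    refine add_le_add_right ?_ _
    rw [r_eq n hn c hR, ← mul_assoc, ENNReal.inv_mul_cancel (kap_ne_zero n) (kap_ne_top n),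
      one_mul]
    exact hedist
  have hre : (volume (ball c R) ^ (n : ℝ)⁻¹) ^ e = kap n ^ e * ENNReal.ofReal R ^ e := by
    rw [r_eq n hn c hR, ENNReal.mul_rpow_of_ne_top (kap_ne_top n) hρt]
  calc u y * (volume (ball c R) ^ (n : ℝ)⁻¹ + edist c y) ^ e
      ≤ u y * (max 1 ((1 + (kap n)⁻¹) ^ e) * (volume (ball c R) ^ (n : ℝ)⁻¹) ^ e) :=
        mul_le_mul_right hbase _
    _ = max 1 ((1 + (kap n)⁻¹) ^ e) * kap n ^ e * ENNReal.ofReal R ^ e * u y := by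
        rw [hre]; ring

/-- Doubling transfer: the inner `L^q` integral is controlled by the outer one. -/
lemma F4 (n : ℕ) (hn : 1 ≤ n) (c : Rn n) {R : ℝ} (hR : 0 < R) (u : Rn n → ℝ≥0∞) (e : ℝ)
    {q : ℝ≥0∞} (hqt : q ≠ ∞) (hq1 : 1 ≤ q.toReal) {Cd : ℝ≥0∞} (hCd : Cd ≠ ∞)
    (hd : ∀ (c₀ : Rn n) (R₀ : ℝ), 0 < R₀ →
      ∫⁻ x in ball c₀ (2 * R₀), u x ^ q.toReal ≤ Cd * ∫⁻ x in ball c₀ R₀, u x ^ q.toReal) :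
    LpNormE (volume.restrict (ball c R)) u q ≤
      max 1 ((2 : ℝ≥0∞) ^ (-e)) * (Cd * Cd * Cd) ^ (1 / q.toReal) *
        (ENNReal.ofReal R ^ (-e) *
          LpNormE (volume.restrict (ball c R)ᶜ) (fun y => u y * edist c y ^ e) q) := by
  have hs0 : 0 < q.toReal := lt_of_lt_of_le one_pos hq1
  have hρ0 : ENNReal.ofReal R ≠ 0 := (ENNReal.ofReal_pos.2 hR).ne'
  have hρt : ENNReal.ofReal R ≠ ∞ := ENNReal.ofReal_ne_top
  set c' : Rn n := transl n hn c (3 * R / 2) with hc'def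
  have hcc' : dist c c' = 3 * R / 2 := dist_transl n hn c (by linarith)
  set M : ℝ≥0∞ := max 1 ((2 : ℝ≥0∞) ^ (-e)) * ENNReal.ofReal R ^ (-e) with hMdef
  have hMne : M ≠ ∞ := by
    refine ENNReal.mul_ne_top ?_ (rpow_ne_top' hρ0 hρt _)
    exact (max_lt ENNReal.one_lt_top
      (rpow_ne_top' (by norm_num) ENNReal.ofNat_ne_top (-e)).lt_top).ne
  -- Step 1 : doubling chain
  have hsub : ball c R ⊆ ball c' (2 * (2 * (2 * (R / 2)))) := by
    intro y hy
    rw [mem_ball] at hy ⊢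
    have h3 := dist_triangle y c c'
    rw [hcc'] at h3
    linarith
  have step1 : ∫⁻ x in ball c R, u x ^ q.toReal ≤
      Cd * (Cd * (Cd * ∫⁻ x in ball c' (R / 2), u x ^ q.toReal)) := by
    calc ∫⁻ x in ball c R, u x ^ q.toReal
        ≤ ∫⁻ x in ball c' (2 * (2 * (2 * (R / 2)))), u x ^ q.toReal :=
          lintegral_mono_set hsub
      _ ≤ Cd * ∫⁻ x in ball c' (2 * (2 * (R / 2))), u x ^ q.toReal :=
          hd c' _ (by linarith)
      _ ≤ Cd * (Cd * ∫⁻ x in ball c' (2 * (R / 2)), u x ^ q.toReal) :=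
          mul_le_mul_right (hd c' _ (by linarith)) _
      _ ≤ Cd * (Cd * (Cd * ∫⁻ x in ball c' (R / 2), u x ^ q.toReal)) :=
          mul_le_mul_right (mul_le_mul_right (hd c' _ (by linarith)) _) _
  -- Step 2 : pointwise bound on the small ball
  have step2 : ∀ x ∈ ball c' (R / 2), u x ^ q.toReal ≤
      M ^ q.toReal * (u x * edist c x ^ e) ^ q.toReal := by
    intro x hx
    rw [mem_ball] at hx
    have ht1 := dist_triangle c x c'
    have ht2 := dist_triangle c c' x
    rw [dist_comm c' x] at ht2
    have hd1 : R ≤ dist c x := by rw [hcc'] at ht1; linarith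
    have hd2 : dist c x ≤ 2 * R := by rw [hcc'] at ht2; linarith
    have hlow : ENNReal.ofReal R ≤ edist c x := by
      rw [edist_ofReal]; exact ENNReal.ofReal_le_ofReal hd1
    have hupp : edist c x ≤ 2 * ENNReal.ofReal R := by
      rw [edist_ofReal]
      calc ENNReal.ofReal (dist c x) ≤ ENNReal.ofReal (2 * R) :=
            ENNReal.ofReal_le_ofReal hd2
        _ = 2 * ENNReal.ofReal R := by
            rw [ENNReal.ofReal_mul (by norm_num)]; norm_num
    have hbase : ENNReal.ofReal R ^ e ≤ max 1 ((2 : ℝ≥0∞) ^ (-e)) * edist c x ^ e :=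
      rpow_between' e (by norm_num) ENNReal.ofNat_ne_top hlow hupp
    have hx1 : u x ≤ M * (u x * edist c x ^ e) := by
      calc u x = u x * (ENNReal.ofReal R ^ (-e) * ENNReal.ofReal R ^ e) := by
            rw [rpow_neg_mul_rpow hρ0 hρt, mul_one]
        _ ≤ u x * (ENNReal.ofReal R ^ (-e) *
              (max 1 ((2 : ℝ≥0∞) ^ (-e)) * edist c x ^ e)) :=
            mul_le_mul_right (mul_le_mul_right hbase _) _
        _ = M * (u x * edist c x ^ e) := by rw [hMdef]; ring
    calc u x ^ q.toReal ≤ (M * (u x * edist c x ^ e)) ^ q.toReal :=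
          ENNReal.rpow_le_rpow hx1 hs0.le
      _ = M ^ q.toReal * (u x * edist c x ^ e) ^ q.toReal :=
          ENNReal.mul_rpow_of_nonneg _ _ hs0.le
  -- Step 3 : transfer to the complement
  have hsub2 : ball c' (R / 2) ⊆ (ball c R)ᶜ := by
    intro y hy
    rw [mem_ball] at hy
    have ht1 := dist_triangle c y c'
    rw [hcc'] at ht1
    simp only [mem_compl_iff, mem_ball, not_lt]
    rw [dist_comm]
    linarith
  have step3 : ∫⁻ x in ball c' (R / 2), u x ^ q.toReal ≤
      M ^ q.toReal * ∫⁻ x in (ball c R)ᶜ, (u x * edist c x ^ e) ^ q.toReal := by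
    calc ∫⁻ x in ball c' (R / 2), u x ^ q.toReal
        ≤ ∫⁻ x in ball c' (R / 2), M ^ q.toReal * (u x * edist c x ^ e) ^ q.toReal :=
          lintegral_mono_ae (ae_restrict_of_forall_mem measurableSet_ball step2)
      _ = M ^ q.toReal * ∫⁻ x in ball c' (R / 2), (u x * edist c x ^ e) ^ q.toReal :=
          lintegral_const_mul' _ _
            (ENNReal.rpow_ne_top_of_nonneg hs0.le hMne)
      _ ≤ M ^ q.toReal * ∫⁻ x in (ball c R)ᶜ, (u x * edist c x ^ e) ^ q.toReal :=
          mul_le_mul_right (lintegral_mono_set hsub2) _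
  -- Combine
  have total : ∫⁻ x in ball c R, u x ^ q.toReal ≤
      (Cd * Cd * Cd) * M ^ q.toReal *
        ∫⁻ x in (ball c R)ᶜ, (u x * edist c x ^ e) ^ q.toReal := by
    calc ∫⁻ x in ball c R, u x ^ q.toReal
        ≤ Cd * (Cd * (Cd * ∫⁻ x in ball c' (R / 2), u x ^ q.toReal)) := step1
      _ ≤ Cd * (Cd * (Cd * (M ^ q.toReal *
            ∫⁻ x in (ball c R)ᶜ, (u x * edist c x ^ e) ^ q.toReal))) := by
          exact mul_le_mul_right (mul_le_mul_right (mul_le_mul_right step3 _) _) _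
      _ = (Cd * Cd * Cd) * M ^ q.toReal *
            ∫⁻ x in (ball c R)ᶜ, (u x * edist c x ^ e) ^ q.toReal := by ring
  rw [LpNormE, if_neg hqt, LpNormE, if_neg hqt]
  calc (∫⁻ x in ball c R, u x ^ q.toReal) ^ (1 / q.toReal)
      ≤ ((Cd * Cd * Cd) * M ^ q.toReal *
          ∫⁻ x in (ball c R)ᶜ, (u x * edist c x ^ e) ^ q.toReal) ^ (1 / q.toReal) :=
        ENNReal.rpow_le_rpow total (by positivity)
    _ = (Cd * Cd * Cd) ^ (1 / q.toReal) * (M ^ q.toReal) ^ (1 / q.toReal) *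
          (∫⁻ x in (ball c R)ᶜ, (u x * edist c x ^ e) ^ q.toReal) ^ (1 / q.toReal) := by
        rw [ENNReal.mul_rpow_of_nonneg _ _ (by positivity : (0:ℝ) ≤ 1 / q.toReal),
          ENNReal.mul_rpow_of_nonneg _ _ (by positivity : (0:ℝ) ≤ 1 / q.toReal)]
    _ = (Cd * Cd * Cd) ^ (1 / q.toReal) * M *
          (∫⁻ x in (ball c R)ᶜ, (u x * edist c x ^ e) ^ q.toReal) ^ (1 / q.toReal) := by
        rw [← ENNReal.rpow_mul, mul_one_div, div_self hs0.ne', ENNReal.rpow_one]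
    _ = max 1 ((2 : ℝ≥0∞) ^ (-e)) * (Cd * Cd * Cd) ^ (1 / q.toReal) *
          (ENNReal.ofReal R ^ (-e) *
            (∫⁻ x in (ball c R)ᶜ, (u x * edist c x ^ e) ^ q.toReal) ^ (1 / q.toReal)) := by
        rw [hMdef]; ring

/-- RH∞ absorption: the inner essential sup is controlled by the outer one. -/
lemma F5 (n : ℕ) (hn : 1 ≤ n) (c : Rn n) {R : ℝ} (hR : 0 < R) (u : Rn n → ℝ≥0∞) (e : ℝ)
    {Cr : ℝ≥0∞} (hCr : Cr ≠ ∞)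
    (hrh : ∀ (c₀ : Rn n) (R₀ : ℝ), 0 < R₀ →
      essSup u (volume.restrict (ball c₀ R₀)) ≤
        Cr * ((volume (ball c₀ R₀))⁻¹ * ∫⁻ x in ball c₀ R₀, u x))
    (hfin : essSup u (volume.restrict (ball c R)) ≠ ∞) :
    essSup u (volume.restrict (ball c R)) ≤
      2 * Cr * max 1 (ENNReal.ofReal (max 1 (2 * Cr.toReal)) ^ (-e)) *
        (ENNReal.ofReal R ^ (-e) *
          essSup (fun y => u y * edist c y ^ e) (volume.restrict (ball c R)ᶜ)) := by
  have hρ0 : ENNReal.ofReal R ≠ 0 := (ENNReal.ofReal_pos.2 hR).ne'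
  have hρt : ENNReal.ofReal R ≠ ∞ := ENNReal.ofReal_ne_top
  set k : ℝ := max 1 (2 * Cr.toReal) with hkdef
  have hk1 : (1 : ℝ) ≤ k := le_max_left _ _
  have hkpos : 0 < k := lt_of_lt_of_le one_pos hk1
  set S := essSup u (volume.restrict (ball c R)) with hSdef
  set A := essSup u (volume.restrict (ball c (k * R) \ ball c R)) with hAdef
  set G := essSup (fun y => u y * edist c y ^ e) (volume.restrict (ball c R)ᶜ) with hGdef
  have hkR : 0 < k * R := by positivity
  have hsub : ball c R ⊆ ball c (k * R) :=
    ball_subset_ball (le_mul_of_one_le_left hR.le hk1)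
  set V := volume (ball c R) with hVdef
  set Vk := volume (ball c (k * R)) with hVkdef
  have hV0 : V ≠ 0 := vol_ball_ne_zero n c hR
  have hVt : V ≠ ∞ := vol_ball_ne_top n c R
  have hVk0 : Vk ≠ 0 := vol_ball_ne_zero n c hkR
  have hVkt : Vk ≠ ∞ := vol_ball_ne_top n c (k * R)
  -- step A : S ≤ 2⁻¹ * S + Cr * A
  have hdecomp : ∫⁻ x in ball c (k * R), u x =
      (∫⁻ x in ball c R, u x) + ∫⁻ x in ball c (k * R) \ ball c R, u x := by
    conv_lhs => rw [← union_diff_cancel hsub]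
    exact lintegral_union (measurableSet_ball.diff measurableSet_ball) disjoint_sdiff_right
  have hIB : ∫⁻ x in ball c R, u x ≤ S * V := setLIntegral_le_essSup_mul volume u _
  have hID : ∫⁻ x in ball c (k * R) \ ball c R, u x ≤ A * Vk :=
    (setLIntegral_le_essSup_mul volume u _).trans
      (mul_le_mul_right (measure_mono diff_subset) _)
  have hVk_eq : Vk = ENNReal.ofReal (k ^ n) * V := vol_ball_scale n c hR hkpos
  have hcoef : 2 * Cr ≤ ENNReal.ofReal (k ^ n) := by
    calc 2 * Cr = ENNReal.ofReal (2 * Cr.toReal) := by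
          rw [ENNReal.ofReal_mul (by norm_num), ENNReal.ofReal_toReal hCr]; norm_num
      _ ≤ ENNReal.ofReal k := ENNReal.ofReal_le_ofReal (le_max_right _ _)
      _ ≤ ENNReal.ofReal (k ^ n) := ENNReal.ofReal_le_ofReal (le_self_pow₀ hk1 (by omega))
  have h2CrV : 2 * (Cr * V) ≤ Vk := by
    calc 2 * (Cr * V) = 2 * Cr * V := (mul_assoc _ _ _).symm
      _ ≤ ENNReal.ofReal (k ^ n) * V := mul_le_mul_left hcoef _
      _ = Vk := hVk_eq.symm
  have hCrV : Cr * V ≤ 2⁻¹ * Vk := by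
    have h := mul_le_mul_right h2CrV (2⁻¹ : ℝ≥0∞)
    rwa [← mul_assoc, ENNReal.inv_mul_cancel (by norm_num) ENNReal.ofNat_ne_top, one_mul] at h
  have hhalf : Cr * V * Vk⁻¹ ≤ 2⁻¹ := by
    calc Cr * V * Vk⁻¹ ≤ 2⁻¹ * Vk * Vk⁻¹ := mul_le_mul_left hCrV _
      _ = 2⁻¹ * (Vk * Vk⁻¹) := mul_assoc _ _ _
      _ = 2⁻¹ := by rw [ENNReal.mul_inv_cancel hVk0 hVkt, mul_one]
  have stepA : S ≤ 2⁻¹ * S + Cr * A := by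
    calc S ≤ essSup u (volume.restrict (ball c (k * R))) :=
          essSup_restrict_mono_set volume u hsub
      _ ≤ Cr * (Vk⁻¹ * ∫⁻ x in ball c (k * R), u x) := hrh c (k * R) hkR
      _ ≤ Cr * (Vk⁻¹ * (S * V + A * Vk)) := by
          refine mul_le_mul_right (mul_le_mul_right ?_ _) _
          rw [hdecomp]
          exact add_le_add hIB hID
      _ = (Cr * V * Vk⁻¹) * S + Cr * (Vk * Vk⁻¹) * A := by ring
      _ ≤ 2⁻¹ * S + Cr * A := by
          rw [ENNReal.mul_inv_cancel hVk0 hVkt, mul_one]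
          exact add_le_add_left (mul_le_mul_left hhalf S) _
  -- step B : absorption
  have stepB : S ≤ 2 * (Cr * A) := by
    have hsum : 2⁻¹ * S + 2⁻¹ * S = S := by
      rw [← add_mul, ENNReal.inv_two_add_inv_two, one_mul]
    have hS2 : 2⁻¹ * S ≠ ∞ := ENNReal.mul_ne_top (by simp) hfin
    nth_rewrite 1 [← hsum] at stepA
    have h := (ENNReal.add_le_add_iff_left hS2).1 stepA
    calc S = 2 * (2⁻¹ * S) := by
          rw [← mul_assoc, ENNReal.mul_inv_cancel (by norm_num) ENNReal.ofNat_ne_top, one_mul]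
      _ ≤ 2 * (Cr * A) := mul_le_mul_right (h.trans (mul_le_mul_right le_rfl _)) _
  -- step C : A is controlled by G
  have stepC : A ≤ max 1 (ENNReal.ofReal k ^ (-e)) * (ENNReal.ofReal R ^ (-e) * G) := by
    have key : ∀ y ∈ ball c (k * R) \ ball c R, u y ≤
        max 1 (ENNReal.ofReal k ^ (-e)) * ENNReal.ofReal R ^ (-e) *
          (u y * edist c y ^ e) := by
      intro y hy
      have hd1 : R ≤ dist c y := by
        rw [dist_comm]
        simpa [mem_ball] using hy.2
      have hd2 : dist c y < k * R := by
        rw [dist_comm]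
        exact mem_ball.1 hy.1
      have hlow : ENNReal.ofReal R ≤ edist c y := by
        rw [edist_ofReal]; exact ENNReal.ofReal_le_ofReal hd1
      have hupp : edist c y ≤ ENNReal.ofReal k * ENNReal.ofReal R := by
        rw [edist_ofReal, ← ENNReal.ofReal_mul hkpos.le]
        exact ENNReal.ofReal_le_ofReal hd2.le
      have hbase : ENNReal.ofReal R ^ e ≤
          max 1 (ENNReal.ofReal k ^ (-e)) * edist c y ^ e :=
        rpow_between' e ((ENNReal.ofReal_pos.2 hkpos).ne') ENNReal.ofReal_ne_top hlow hupp
      calc u y = u y * (ENNReal.ofReal R ^ (-e) * ENNReal.ofReal R ^ e) := by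
            rw [rpow_neg_mul_rpow hρ0 hρt, mul_one]
        _ ≤ u y * (ENNReal.ofReal R ^ (-e) *
              (max 1 (ENNReal.ofReal k ^ (-e)) * edist c y ^ e)) :=
            mul_le_mul_right (mul_le_mul_right hbase _) _
        _ = max 1 (ENNReal.ofReal k ^ (-e)) * ENNReal.ofReal R ^ (-e) *
              (u y * edist c y ^ e) := by ring
    calc A ≤ essSup (fun y => max 1 (ENNReal.ofReal k ^ (-e)) * ENNReal.ofReal R ^ (-e) *
            (u y * edist c y ^ e)) (volume.restrict (ball c (k * R) \ ball c R)) :=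
          essSup_mono_ae (ae_restrict_of_forall_mem
            (measurableSet_ball.diff measurableSet_ball) key)
      _ = max 1 (ENNReal.ofReal k ^ (-e)) * ENNReal.ofReal R ^ (-e) *
            essSup (fun y => u y * edist c y ^ e)
              (volume.restrict (ball c (k * R) \ ball c R)) := ENNReal.essSup_const_mul
      _ ≤ max 1 (ENNReal.ofReal k ^ (-e)) * ENNReal.ofReal R ^ (-e) * G := by
          refine mul_le_mul_right (essSup_restrict_mono_set volume _ ?_) _
          exact fun y hy => hy.2
      _ = max 1 (ENNReal.ofReal k ^ (-e)) * (ENNReal.ofReal R ^ (-e) * G) := mul_assoc _ _ _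
  calc S ≤ 2 * (Cr * A) := stepB
    _ ≤ 2 * (Cr * (max 1 (ENNReal.ofReal k ^ (-e)) * (ENNReal.ofReal R ^ (-e) * G))) :=
        mul_le_mul_right (mul_le_mul_right stepC _) _
    _ = 2 * Cr * max 1 (ENNReal.ofReal k ^ (-e)) * (ENNReal.ofReal R ^ (-e) * G) := by ring

/-- Control of the inner essential sup by the global factor of a shifted ball
(used to prove finiteness). -/
lemma F6 (n : ℕ) (hn : 1 ≤ n) (c : Rn n) {R : ℝ} (hR : 0 < R) (u : Rn n → ℝ≥0∞) (e : ℝ) :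
    essSup u (volume.restrict (ball c R)) ≤
      max 1 ((5 : ℝ≥0∞) ^ (-e)) * ENNReal.ofReal (R / 2) ^ (-e) *
        essSup (fun y => u y * edist (transl n hn c (3 * R / 2)) y ^ e)
          (volume.restrict (ball (transl n hn c (3 * R / 2)) (R / 2))ᶜ) := by
  set c' : Rn n := transl n hn c (3 * R / 2) with hc'def
  have hcc' : dist c c' = 3 * R / 2 := dist_transl n hn c (by linarith)
  have hρ0 : ENNReal.ofReal (R / 2) ≠ 0 := (ENNReal.ofReal_pos.2 (by linarith)).ne'
  have hρt : ENNReal.ofReal (R / 2) ≠ ∞ := ENNReal.ofReal_ne_top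
  have key : ∀ y ∈ ball c R, u y ≤
      max 1 ((5 : ℝ≥0∞) ^ (-e)) * ENNReal.ofReal (R / 2) ^ (-e) *
        (u y * edist c' y ^ e) := by
    intro y hy
    rw [mem_ball] at hy
    have ht2 := dist_triangle c' c y
    have ht3 := dist_triangle c y c'
    rw [dist_comm y c] at hy
    rw [dist_comm c' c, hcc'] at ht2
    rw [hcc', dist_comm y c'] at ht3
    have hd1 : R / 2 ≤ dist c' y := by linarith
    have hd2 : dist c' y ≤ 5 * (R / 2) := by linarith
    have hlow : ENNReal.ofReal (R / 2) ≤ edist c' y := by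
      rw [edist_ofReal]; exact ENNReal.ofReal_le_ofReal hd1
    have hupp : edist c' y ≤ 5 * ENNReal.ofReal (R / 2) := by
      rw [edist_ofReal]
      calc ENNReal.ofReal (dist c' y) ≤ ENNReal.ofReal (5 * (R / 2)) :=
            ENNReal.ofReal_le_ofReal hd2
        _ = 5 * ENNReal.ofReal (R / 2) := by
            rw [ENNReal.ofReal_mul (by norm_num)]; norm_num
    have hbase : ENNReal.ofReal (R / 2) ^ e ≤
        max 1 ((5 : ℝ≥0∞) ^ (-e)) * edist c' y ^ e :=
      rpow_between' e (by norm_num) (by norm_num) hlow hupp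
    calc u y = u y * (ENNReal.ofReal (R / 2) ^ (-e) * ENNReal.ofReal (R / 2) ^ e) := by
          rw [rpow_neg_mul_rpow hρ0 hρt, mul_one]
      _ ≤ u y * (ENNReal.ofReal (R / 2) ^ (-e) *
            (max 1 ((5 : ℝ≥0∞) ^ (-e)) * edist c' y ^ e)) :=
          mul_le_mul_right (mul_le_mul_right hbase _) _
      _ = max 1 ((5 : ℝ≥0∞) ^ (-e)) * ENNReal.ofReal (R / 2) ^ (-e) *
            (u y * edist c' y ^ e) := by ring
  have hsub : ball c R ⊆ (ball c' (R / 2))ᶜ := by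
    intro y hy
    rw [mem_ball] at hy
    rw [dist_comm y c] at hy
    have ht3 := dist_triangle c y c'
    rw [hcc'] at ht3
    simp only [mem_compl_iff, mem_ball, not_lt]
    linarith
  calc essSup u (volume.restrict (ball c R))
      ≤ essSup (fun y => max 1 ((5 : ℝ≥0∞) ^ (-e)) * ENNReal.ofReal (R / 2) ^ (-e) *
          (u y * edist c' y ^ e)) (volume.restrict (ball c R)) :=
        essSup_mono_ae (ae_restrict_of_forall_mem measurableSet_ball key)
    _ = max 1 ((5 : ℝ≥0∞) ^ (-e)) * ENNReal.ofReal (R / 2) ^ (-e) *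
          essSup (fun y => u y * edist c' y ^ e) (volume.restrict (ball c R)) :=
        ENNReal.essSup_const_mul
    _ ≤ max 1 ((5 : ℝ≥0∞) ^ (-e)) * ENNReal.ofReal (R / 2) ^ (-e) *
          essSup (fun y => u y * edist c' y ^ e) (volume.restrict (ball c' (R / 2))ᶜ) :=
        mul_le_mul_right (essSup_restrict_mono_set volume _ hsub) _

/-- positivity of the essential supremum of an a.e. positive function. -/
lemma essSup_pos_restrict {α : Type*} [MeasurableSpace α] (μ : Measure α) {f : α → ℝ≥0∞}
    (hf : ∀ᵐ x ∂μ, 0 < f x) {s : Set α} (hs0 : μ s ≠ 0) :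
    0 < essSup f (μ.restrict s) := by
  rw [pos_iff_ne_zero]
  intro h0
  have hz : f =ᵐ[μ.restrict s] 0 := ENNReal.essSup_eq_zero_iff.1 h0
  have : ∀ᵐ _x ∂μ.restrict s, False := by
    filter_upwards [hz, ae_restrict_of_ae hf] with x h1 h2
    exact absurd h1 h2.ne'
  have h2 := ae_contra this
  rw [Measure.restrict_apply_univ] at h2
  exact hs0 h2

/-- positivity of the global-type factors. -/
lemma factor_pos (n : ℕ) {v : Rn n → ℝ≥0∞} (hv : Measurable v)
    (hvfin : ∀ᵐ x ∂(volume : Measure (Rn n)), 0 < v x ∧ v x < ∞)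
    (c₀ : Rn n) (e : ℝ) {s : Set (Rn n)} {c₁ : Rn n} {r₁ : ℝ} (hr₁ : 0 < r₁)
    (hbs : ball c₁ r₁ ⊆ s) (hne : ∀ y ∈ ball c₁ r₁, dist c₀ y ≠ 0)
    {q : ℝ≥0∞} (hq : q ≠ ∞ → 1 ≤ q.toReal) :
    0 < LpNormE (volume.restrict s) (fun y => (v y)⁻¹ * edist c₀ y ^ e) q := by
  have hq0 : q ≠ ∞ → 0 < q.toReal := fun h => lt_of_lt_of_le one_pos (hq h)
  have hmeas : Measurable fun y => (v y)⁻¹ * edist c₀ y ^ e :=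
    hv.inv.mul (((continuous_const.edist continuous_id).measurable).pow measurable_const)
  refine LpNormE_pos volume hmeas measurableSet_ball hbs (measure_ball_pos _ _ hr₁) ?_ hq0
  filter_upwards [hvfin] with x hx hmem
  have h1 : (v x)⁻¹ ≠ 0 := ENNReal.inv_ne_zero.2 hx.2.ne
  have hepos : edist c₀ x ≠ 0 := by
    rw [edist_ofReal, Ne, ENNReal.ofReal_eq_zero, not_le]
    exact lt_of_le_of_ne dist_nonneg (Ne.symm (hne x hmem))
  have h2 : edist c₀ x ^ e ≠ 0 := rpow_ne_zero' hepos (edist_ne_top _ _) e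
  exact ENNReal.mul_pos h1 h2

/-- Backward per-factor bound, case `p i > 1` (doubling). -/
lemma factor_bound_gt (n : ℕ) (hn : 1 ≤ n) (c : Rn n) {R : ℝ} (hR : 0 < R)
    (u : Rn n → ℝ≥0∞) (e : ℝ) {q : ℝ≥0∞} (hqt : q ≠ ∞) (hq1 : 1 ≤ q.toReal)
    {Cd : ℝ≥0∞} (hCd : Cd ≠ ∞)
    (hd : ∀ (c₀ : Rn n) (R₀ : ℝ), 0 < R₀ →
      ∫⁻ x in ball c₀ (2 * R₀), u x ^ q.toReal ≤ Cd * ∫⁻ x in ball c₀ R₀, u x ^ q.toReal) :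
    LpNormE volume (fun y => u y * (volume (ball c R) ^ (n : ℝ)⁻¹ + edist c y) ^ e) q ≤
      (max 1 ((1 + kap n) ^ e) +
        max 1 ((1 + (kap n)⁻¹) ^ e) * kap n ^ e *
          (max 1 ((2 : ℝ≥0∞) ^ (-e)) * (Cd * Cd * Cd) ^ (1 / q.toReal))) *
        LpNormE (volume.restrict (ball c R)ᶜ) (fun y => u y * edist c y ^ e) q := by
  have hq' : q ≠ ∞ → 1 ≤ q.toReal := fun _ => hq1
  have hρ0 : ENNReal.ofReal R ≠ 0 := (ENNReal.ofReal_pos.2 hR).ne'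
  have hρt : ENNReal.ofReal R ≠ ∞ := ENNReal.ofReal_ne_top
  calc LpNormE volume (fun y => u y * (volume (ball c R) ^ (n : ℝ)⁻¹ + edist c y) ^ e) q
      ≤ LpNormE (volume.restrict (ball c R))
          (fun y => u y * (volume (ball c R) ^ (n : ℝ)⁻¹ + edist c y) ^ e) q +
        LpNormE (volume.restrict (ball c R)ᶜ)
          (fun y => u y * (volume (ball c R) ^ (n : ℝ)⁻¹ + edist c y) ^ e) q :=
      LpNormE_split volume _ measurableSet_ball hq'
    _ ≤ max 1 ((1 + (kap n)⁻¹) ^ e) * kap n ^ e * ENNReal.ofReal R ^ e *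
          LpNormE (volume.restrict (ball c R)) u q +
        max 1 ((1 + kap n) ^ e) *
          LpNormE (volume.restrict (ball c R)ᶜ) (fun y => u y * edist c y ^ e) q :=
      add_le_add (F3 n hn c hR u e hq') (F2 n hn c hR u e hq')
    _ ≤ max 1 ((1 + (kap n)⁻¹) ^ e) * kap n ^ e * ENNReal.ofReal R ^ e *
          (max 1 ((2 : ℝ≥0∞) ^ (-e)) * (Cd * Cd * Cd) ^ (1 / q.toReal) *
            (ENNReal.ofReal R ^ (-e) *
              LpNormE (volume.restrict (ball c R)ᶜ) (fun y => u y * edist c y ^ e) q)) +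
        max 1 ((1 + kap n) ^ e) *
          LpNormE (volume.restrict (ball c R)ᶜ) (fun y => u y * edist c y ^ e) q :=
      add_le_add_left (mul_le_mul_right (F4 n hn c hR u e hqt hq1 hCd hd) _) _
    _ = ENNReal.ofReal R ^ e * ENNReal.ofReal R ^ (-e) *
          (max 1 ((1 + (kap n)⁻¹) ^ e) * kap n ^ e *
            (max 1 ((2 : ℝ≥0∞) ^ (-e)) * (Cd * Cd * Cd) ^ (1 / q.toReal)) *
            LpNormE (volume.restrict (ball c R)ᶜ) (fun y => u y * edist c y ^ e) q) +
        max 1 ((1 + kap n) ^ e) *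
          LpNormE (volume.restrict (ball c R)ᶜ) (fun y => u y * edist c y ^ e) q := by
      ring
    _ = (max 1 ((1 + kap n) ^ e) +
          max 1 ((1 + (kap n)⁻¹) ^ e) * kap n ^ e *
            (max 1 ((2 : ℝ≥0∞) ^ (-e)) * (Cd * Cd * Cd) ^ (1 / q.toReal))) *
        LpNormE (volume.restrict (ball c R)ᶜ) (fun y => u y * edist c y ^ e) q := by
      rw [rpow_mul_rpow_neg hρ0 hρt, one_mul]
      ring

/-- Backward per-factor bound, case `p i = 1` (`RH_∞`). -/
lemma factor_bound_one (n : ℕ) (hn : 1 ≤ n) (c : Rn n) {R : ℝ} (hR : 0 < R)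
    (u : Rn n → ℝ≥0∞) (e : ℝ) {Cr : ℝ≥0∞} (hCr : Cr ≠ ∞)
    (hrh : ∀ (c₀ : Rn n) (R₀ : ℝ), 0 < R₀ →
      essSup u (volume.restrict (ball c₀ R₀)) ≤
        Cr * ((volume (ball c₀ R₀))⁻¹ * ∫⁻ x in ball c₀ R₀, u x))
    (hfin : essSup u (volume.restrict (ball c R)) ≠ ∞) :
    LpNormE volume (fun y => u y * (volume (ball c R) ^ (n : ℝ)⁻¹ + edist c y) ^ e) ∞ ≤
      (max 1 ((1 + kap n) ^ e) +
        max 1 ((1 + (kap n)⁻¹) ^ e) * kap n ^ e *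
          (2 * Cr * max 1 (ENNReal.ofReal (max 1 (2 * Cr.toReal)) ^ (-e)))) *
        LpNormE (volume.restrict (ball c R)ᶜ) (fun y => u y * edist c y ^ e) ∞ := by
  have hq' : (∞ : ℝ≥0∞) ≠ ∞ → 1 ≤ (∞ : ℝ≥0∞).toReal := fun h => absurd rfl h
  have hρ0 : ENNReal.ofReal R ≠ 0 := (ENNReal.ofReal_pos.2 hR).ne'
  have hρt : ENNReal.ofReal R ≠ ∞ := ENNReal.ofReal_ne_top
  have hinner2 : LpNormE (volume.restrict (ball c R)) u ∞ ≤
      2 * Cr * max 1 (ENNReal.ofReal (max 1 (2 * Cr.toReal)) ^ (-e)) *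
        (ENNReal.ofReal R ^ (-e) *
          LpNormE (volume.restrict (ball c R)ᶜ) (fun y => u y * edist c y ^ e) ∞) := by
    rw [LpNormE_top, LpNormE_top]
    exact F5 n hn c hR u e hCr hrh hfin
  calc LpNormE volume (fun y => u y * (volume (ball c R) ^ (n : ℝ)⁻¹ + edist c y) ^ e) ∞
      ≤ LpNormE (volume.restrict (ball c R))
          (fun y => u y * (volume (ball c R) ^ (n : ℝ)⁻¹ + edist c y) ^ e) ∞ +
        LpNormE (volume.restrict (ball c R)ᶜ)
          (fun y => u y * (volume (ball c R) ^ (n : ℝ)⁻¹ + edist c y) ^ e) ∞ :=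
      LpNormE_split volume _ measurableSet_ball hq'
    _ ≤ max 1 ((1 + (kap n)⁻¹) ^ e) * kap n ^ e * ENNReal.ofReal R ^ e *
          LpNormE (volume.restrict (ball c R)) u ∞ +
        max 1 ((1 + kap n) ^ e) *
          LpNormE (volume.restrict (ball c R)ᶜ) (fun y => u y * edist c y ^ e) ∞ :=
      add_le_add (F3 n hn c hR u e hq') (F2 n hn c hR u e hq')
    _ ≤ max 1 ((1 + (kap n)⁻¹) ^ e) * kap n ^ e * ENNReal.ofReal R ^ e *
          (2 * Cr * max 1 (ENNReal.ofReal (max 1 (2 * Cr.toReal)) ^ (-e)) *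
            (ENNReal.ofReal R ^ (-e) *
              LpNormE (volume.restrict (ball c R)ᶜ) (fun y => u y * edist c y ^ e) ∞)) +
        max 1 ((1 + kap n) ^ e) *
          LpNormE (volume.restrict (ball c R)ᶜ) (fun y => u y * edist c y ^ e) ∞ :=
      add_le_add_left (mul_le_mul_right hinner2 _) _
    _ = ENNReal.ofReal R ^ e * ENNReal.ofReal R ^ (-e) *
          (max 1 ((1 + (kap n)⁻¹) ^ e) * kap n ^ e *
            (2 * Cr * max 1 (ENNReal.ofReal (max 1 (2 * Cr.toReal)) ^ (-e))) *
            LpNormE (volume.restrict (ball c R)ᶜ) (fun y => u y * edist c y ^ e) ∞) +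
        max 1 ((1 + kap n) ^ e) *
          LpNormE (volume.restrict (ball c R)ᶜ) (fun y => u y * edist c y ^ e) ∞ := by
      ring
    _ = (max 1 ((1 + kap n) ^ e) +
          max 1 ((1 + (kap n)⁻¹) ^ e) * kap n ^ e *
            (2 * Cr * max 1 (ENNReal.ofReal (max 1 (2 * Cr.toReal)) ^ (-e)))) *
        LpNormE (volume.restrict (ball c R)ᶜ) (fun y => u y * edist c y ^ e) ∞ := by
      rw [rpow_mul_rpow_neg hρ0 hρt, one_mul]
      ring

end HmAux
end HmAuxSec

/-- Lemma 6.1: under `RH_∞` for `vᵢ⁻¹` when `pᵢ = 1` and doubling of `vᵢ^{-pᵢ'}` when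
`pᵢ > 1`, the condition `H_m(p⃗,β,δ̃)` is equivalent to the global condition. -/
theorem Hm_iff_global
    (n m : ℕ) (hn : 1 ≤ n) (hm : 1 ≤ m) (δ δt : ℝ)
    (β : Fin m → ℝ) (hβ : ∀ i, 0 < β i ∧ β i < n)
    (p : Fin m → ℝ≥0∞) (hp : ∀ i, 1 ≤ p i)
    (w : Rn n → ℝ≥0∞) (v : Fin m → Rn n → ℝ≥0∞)
    (hw : IsWeight n w) (hv : ∀ i, IsWeight n (v i))
    (hRHinf : ∀ i, p i = 1 → MemRHinf n fun x => (v i x)⁻¹)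
    (hdoub : ∀ i, 1 < p i → Doubling n fun x => (v i x)⁻¹ ^ conjR (p i)) :
    MemHm n m δ δt β p w v ↔ GlobalCond n m δ δt β p w v := by
  have hqhyp : ∀ i : Fin m, conjE (p i) ≠ ∞ → 1 ≤ (conjE (p i)).toReal :=
    fun i => HmAux.conjE_hyp (hp i)
  constructor
  · rintro ⟨C, hC, hbound⟩
    refine ⟨(∏ i, max 1 ((1 + HmAux.kap n) ^ (-(-((n : ℝ) - β i + δ / (m : ℝ)))))) * C,
      ENNReal.mul_ne_top ?_ hC, ?_⟩
    · refine (ENNReal.prod_lt_top fun i _ => ?_).ne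
      exact max_lt ENNReal.one_lt_top (HmAux.rpow_ne_top' (HmAux.one_add_kap_ne_zero n)
        (HmAux.one_add_kap_ne_top n) _).lt_top
    · intro c R hR
      have hfac : ∀ i : Fin m, GlobalFactor n m δ β p v c R i ≤
          max 1 ((1 + HmAux.kap n) ^ (-(-((n : ℝ) - β i + δ / (m : ℝ))))) *
            HmFactor n m δ β p v c R i := by
        intro i
        unfold GlobalFactor HmFactor
        exact HmAux.F1 n hn c hR (fun y => (v i y)⁻¹)
          (-((n : ℝ) - β i + δ / (m : ℝ))) (hqhyp i)
      have hb := hbound c R hR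
      unfold HmLHS at hb
      calc essSup w (volume.restrict (ball c R)) / volume (ball c R) ^ ((δt - δ) / (n : ℝ)) *
            ∏ i, GlobalFactor n m δ β p v c R i
          ≤ essSup w (volume.restrict (ball c R)) / volume (ball c R) ^ ((δt - δ) / (n : ℝ)) *
            ∏ i, (max 1 ((1 + HmAux.kap n) ^ (-(-((n : ℝ) - β i + δ / (m : ℝ))))) *
              HmFactor n m δ β p v c R i) :=
            mul_le_mul_right (Finset.prod_le_prod' fun i _ => hfac i) _
        _ = (∏ i, max 1 ((1 + HmAux.kap n) ^ (-(-((n : ℝ) - β i + δ / (m : ℝ)))))) *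
            (essSup w (volume.restrict (ball c R)) /
                volume (ball c R) ^ ((δt - δ) / (n : ℝ)) *
              ∏ i, HmFactor n m δ β p v c R i) := by
            rw [Finset.prod_mul_distrib, mul_left_comm]
        _ ≤ (∏ i, max 1 ((1 + HmAux.kap n) ^ (-(-((n : ℝ) - β i + δ / (m : ℝ)))))) * C :=
            mul_le_mul_right hb _
  · rintro ⟨C, hC, hbound⟩
    have hD : ∀ i : Fin m, ∃ D : ℝ≥0∞, D ≠ ∞ ∧ ∀ (c : Rn n) (R : ℝ), 0 < R →
        HmFactor n m δ β p v c R i ≤ D * GlobalFactor n m δ β p v c R i := by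
      intro i
      by_cases hp1 : p i = 1
      · obtain ⟨Cr, hCr, hrh⟩ := hRHinf i hp1
        have hqtop : conjE (p i) = ∞ := by rw [hp1]; exact HmAux.conjE_one
        refine ⟨max 1 ((1 + HmAux.kap n) ^ (-((n : ℝ) - β i + δ / (m : ℝ)))) +
          max 1 ((1 + (HmAux.kap n)⁻¹) ^ (-((n : ℝ) - β i + δ / (m : ℝ)))) *
            HmAux.kap n ^ (-((n : ℝ) - β i + δ / (m : ℝ))) *
            (2 * Cr * max 1 (ENNReal.ofReal (max 1 (2 * Cr.toReal)) ^
              (-(-((n : ℝ) - β i + δ / (m : ℝ)))))), ?_, ?_⟩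
        · refine ENNReal.add_ne_top.2 ⟨?_, ?_⟩
          · exact (max_lt ENNReal.one_lt_top (HmAux.rpow_ne_top'
              (HmAux.one_add_kap_ne_zero n) (HmAux.one_add_kap_ne_top n) _).lt_top).ne
          · refine ENNReal.mul_ne_top (ENNReal.mul_ne_top ?_ ?_) (ENNReal.mul_ne_top ?_ ?_)
            · refine (max_lt ENNReal.one_lt_top (HmAux.rpow_ne_top' (by simp)
                (by simp [ENNReal.add_ne_top, ENNReal.inv_ne_top.2 (HmAux.kap_ne_zero n)])
                _).lt_top).ne
            · exact HmAux.rpow_ne_top' (HmAux.kap_ne_zero n) (HmAux.kap_ne_top n) _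
            · exact ENNReal.mul_ne_top (by simp) hCr
            · refine (max_lt ENNReal.one_lt_top (HmAux.rpow_ne_top' ?_
                ENNReal.ofReal_ne_top _).lt_top).ne
              exact (ENNReal.ofReal_pos.2 (lt_of_lt_of_le one_pos (le_max_left _ _))).ne'
        · intro c R hR
          have hball2 : (0 : ℝ) < R / 2 := by linarith
          have hcc' : dist c (HmAux.transl n hn c (3 * R / 2)) = 3 * R / 2 :=
            HmAux.dist_transl n hn c (by linarith)
          -- positivity of factors of the shifted ball
          have hsub4 : ball c (R / 4) ⊆ (ball (HmAux.transl n hn c (3 * R / 2)) (R / 2))ᶜ := by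
            intro y hy
            rw [mem_ball] at hy
            have ht := dist_triangle c y (HmAux.transl n hn c (3 * R / 2))
            rw [hcc', dist_comm c y] at ht
            simp only [mem_compl_iff, mem_ball, not_lt]
            linarith
          have hne4 : ∀ y ∈ ball c (R / 4),
              dist (HmAux.transl n hn c (3 * R / 2)) y ≠ 0 := by
            intro y hy
            rw [mem_ball] at hy
            have ht := dist_triangle c y (HmAux.transl n hn c (3 * R / 2))
            rw [hcc', dist_comm c y] at ht
            rw [dist_comm]
            exact ne_of_gt (by linarith)
          have hGpos : ∀ j : Fin m,
              GlobalFactor n m δ β p v (HmAux.transl n hn c (3 * R / 2)) (R / 2) j ≠ 0 := by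
            intro j
            have hpos := HmAux.factor_pos n (hv j).1 (hv j).2.1
              (HmAux.transl n hn c (3 * R / 2)) (-((n : ℝ) - β j + δ / (m : ℝ)))
              (by linarith : (0 : ℝ) < R / 4) hsub4 hne4 (hqhyp j)
            unfold GlobalFactor
            exact hpos.ne'
          have hWne0 : essSup w (volume.restrict
                (ball (HmAux.transl n hn c (3 * R / 2)) (R / 2))) /
              volume (ball (HmAux.transl n hn c (3 * R / 2)) (R / 2)) ^
                ((δt - δ) / (n : ℝ)) ≠ 0 := by
            rw [div_eq_mul_inv]
            refine mul_ne_zero ?_ (ENNReal.inv_ne_zero.2 (HmAux.rpow_ne_top'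
              (HmAux.vol_ball_ne_zero n _ hball2) (HmAux.vol_ball_ne_top n _ (R / 2)) _))
            exact (HmAux.essSup_pos_restrict volume (hw.2.1.mono fun x h => h.1)
              (HmAux.vol_ball_ne_zero n _ hball2)).ne'
          have hGfin : GlobalFactor n m δ β p v
              (HmAux.transl n hn c (3 * R / 2)) (R / 2) i ≠ ∞ := by
            intro htop
            have hglob := hbound (HmAux.transl n hn c (3 * R / 2)) (R / 2) hball2
            rw [← Finset.mul_prod_erase Finset.univ _ (Finset.mem_univ i), htop,
              ENNReal.top_mul (Finset.prod_ne_zero_iff.2 fun j _ => hGpos j),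
              ENNReal.mul_top hWne0] at hglob
            exact hC (top_le_iff.1 hglob)
          have hGF : GlobalFactor n m δ β p v (HmAux.transl n hn c (3 * R / 2)) (R / 2) i =
              essSup (fun y => (v i y)⁻¹ *
                  edist (HmAux.transl n hn c (3 * R / 2)) y ^
                    (-((n : ℝ) - β i + δ / (m : ℝ))))
                (volume.restrict (ball (HmAux.transl n hn c (3 * R / 2)) (R / 2))ᶜ) := by
            unfold GlobalFactor
            rw [hqtop]
            exact HmAux.LpNormE_top _ _
          have hfin : essSup (fun x => (v i x)⁻¹) (volume.restrict (ball c R)) ≠ ∞ := by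
            have h6 := HmAux.F6 n hn c hR (fun x => (v i x)⁻¹)
              (-((n : ℝ) - β i + δ / (m : ℝ)))
            refine ne_top_of_le_ne_top ?_ h6
            refine ENNReal.mul_ne_top (ENNReal.mul_ne_top ?_ ?_) ?_
            · exact (max_lt ENNReal.one_lt_top (HmAux.rpow_ne_top' (by norm_num)
                (by norm_num) _).lt_top).ne
            · exact HmAux.rpow_ne_top' ((ENNReal.ofReal_pos.2 hball2).ne')
                ENNReal.ofReal_ne_top _
            · rw [← hGF]
              exact hGfin
          have hfb := HmAux.factor_bound_one n hn c hR (fun x => (v i x)⁻¹)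
            (-((n : ℝ) - β i + δ / (m : ℝ))) hCr hrh hfin
          unfold HmFactor GlobalFactor
          rw [hqtop]
          exact hfb
      · have hgt : 1 < p i := lt_of_le_of_ne (hp i) (Ne.symm hp1)
        obtain ⟨Cd, hCd, hdbl⟩ := hdoub i hgt
        have hqt : conjE (p i) ≠ ∞ := HmAux.conjE_ne_top hgt.ne'
        have hq1 : 1 ≤ (conjE (p i)).toReal := hqhyp i hqt
        have hdbl' : ∀ (c₀ : Rn n) (R₀ : ℝ), 0 < R₀ →
            ∫⁻ x in ball c₀ (2 * R₀), ((v i x)⁻¹) ^ (conjE (p i)).toReal ≤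
              Cd * ∫⁻ x in ball c₀ R₀, ((v i x)⁻¹) ^ (conjE (p i)).toReal := by
          simp_rw [HmAux.conjE_toReal hgt]
          exact hdbl
        refine ⟨max 1 ((1 + HmAux.kap n) ^ (-((n : ℝ) - β i + δ / (m : ℝ)))) +
          max 1 ((1 + (HmAux.kap n)⁻¹) ^ (-((n : ℝ) - β i + δ / (m : ℝ)))) *
            HmAux.kap n ^ (-((n : ℝ) - β i + δ / (m : ℝ))) *
            (max 1 ((2 : ℝ≥0∞) ^ (-(-((n : ℝ) - β i + δ / (m : ℝ))))) *
              (Cd * Cd * Cd) ^ (1 / (conjE (p i)).toReal)), ?_, ?_⟩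
        · refine ENNReal.add_ne_top.2 ⟨?_, ?_⟩
          · exact (max_lt ENNReal.one_lt_top (HmAux.rpow_ne_top'
              (HmAux.one_add_kap_ne_zero n) (HmAux.one_add_kap_ne_top n) _).lt_top).ne
          · refine ENNReal.mul_ne_top (ENNReal.mul_ne_top ?_ ?_) (ENNReal.mul_ne_top ?_ ?_)
            · refine (max_lt ENNReal.one_lt_top (HmAux.rpow_ne_top' (by simp)
                (by simp [ENNReal.add_ne_top, ENNReal.inv_ne_top.2 (HmAux.kap_ne_zero n)])
                _).lt_top).ne
            · exact HmAux.rpow_ne_top' (HmAux.kap_ne_zero n) (HmAux.kap_ne_top n) _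
            · exact (max_lt ENNReal.one_lt_top (HmAux.rpow_ne_top' (by norm_num)
                ENNReal.ofNat_ne_top _).lt_top).ne
            · exact ENNReal.rpow_ne_top_of_nonneg (by positivity)
                (ENNReal.mul_ne_top (ENNReal.mul_ne_top hCd hCd) hCd)
        · intro c R hR
          have hfb := HmAux.factor_bound_gt n hn c hR (fun x => (v i x)⁻¹)
            (-((n : ℝ) - β i + δ / (m : ℝ))) hqt hq1 hCd hdbl'
          unfold HmFactor GlobalFactor
          exact hfb
    choose D hDne hDle using hD
    refine ⟨(∏ i, D i) * C,
      ENNReal.mul_ne_top (ENNReal.prod_lt_top fun i _ => (hDne i).lt_top).ne hC, ?_⟩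
    intro c R hR
    unfold HmLHS
    calc essSup w (volume.restrict (ball c R)) / volume (ball c R) ^ ((δt - δ) / (n : ℝ)) *
          ∏ i, HmFactor n m δ β p v c R i
        ≤ essSup w (volume.restrict (ball c R)) / volume (ball c R) ^ ((δt - δ) / (n : ℝ)) *
          ∏ i, (D i * GlobalFactor n m δ β p v c R i) :=
          mul_le_mul_right (Finset.prod_le_prod' fun i _ => hDle i c R hR) _
      _ = (∏ i, D i) *
          (essSup w (volume.restrict (ball c R)) /
              volume (ball c R) ^ ((δt - δ) / (n : ℝ)) *
            ∏ i, GlobalFactor n m δ β p v c R i) := by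
          rw [Finset.prod_mul_distrib, mul_left_comm]
      _ ≤ (∏ i, D i) * C := mul_le_mul_right (hbound c R hR) _
end
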